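/- arXiv:0707.1048 — 11 statements merged into one kernel-verified Lean document; each statement's English description precedes it below -/
import Mathlib

section
/- For every integer n ≥ 3 and every odd integer m with 1 ≤ m ≤ n, the regular n-gon is m-self-dual. Concretely: let v : ZMod n → ℝ³ be given by v j = (cos(2πj/n), sin(2πj/n), 1), and let k := (m−1)/2 viewed in ZMod n. Then there exists a linear equivalence f : ℝ³ ≃ (ℝ³)* such that for every j ∈ ZMod n, f (v j) (v (j+k)) = 0 and f (v j) (v (j+k+1)) = 0. -/
set_option maxHeartbeats 1000000

open Real

/-- The regular `n`-gon is `m`-self-dual for every odd `m` with `1 ≤ m ≤ n`. -/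
theorem stmt_0 (n m : ℕ) (hn : 3 ≤ n) (hmodd : Odd m) (hm1 : 1 ≤ m) (hmn : m ≤ n)
    (v : ZMod n → Fin 3 → ℝ)
    (hv : ∀ j : ZMod n,
      v j = ![Real.cos (2 * Real.pi * j.val / n), Real.sin (2 * Real.pi * j.val / n), 1]) :
    ∃ f : (Fin 3 → ℝ) ≃ₗ[ℝ] Module.Dual ℝ (Fin 3 → ℝ),
      ∀ j : ZMod n,
        f (v j) (v (j + (((m - 1) / 2 : ℕ) : ZMod n))) = 0 ∧
        f (v j) (v (j + (((m - 1) / 2 : ℕ) : ZMod n) + 1)) = 0 := by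
  have : NeZero n := ⟨by omega⟩
  have hn0 : (n : ℝ) ≠ 0 := by positivity
  have hnpos : (0:ℝ) < n := by positivity
  set k' : ℕ := (m - 1) / 2 with hk'
  have hk'n : k' < n := by omega
  have hk'1n : k' + 1 < n := by
    rcases hmodd with ⟨t, ht⟩
    omega
  set α : ℝ := 2 * π * k' / n with hα
  set β : ℝ := 2 * π * (k' + 1) / n with hβ
  set d : ℝ := Real.sin (2 * π / n) with hd
  have hβα : β - α = 2 * π / n := by
    rw [hα, hβ]; field_simp; ring
  have hdpos : 0 < d := by
    rw [hd]
    apply Real.sin_pos_of_pos_of_lt_pi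
    · positivity
    · rw [div_lt_iff₀ hnpos]
      have h3 : (3:ℝ) ≤ n := by exact_mod_cast hn
      nlinarith [Real.pi_pos, mul_le_mul_of_nonneg_right h3 Real.pi_pos.le]
  have hdne : d ≠ 0 := ne_of_gt hdpos
  set a : ℝ := (Real.sin α - Real.sin β) / d with ha
  set c : ℝ := (Real.cos β - Real.cos α) / d with hc
  have hsinβα : Real.sin β * Real.cos α - Real.cos β * Real.sin α = d := by
    rw [← Real.sin_sub, hβα, hd]
  have keyα : a * Real.cos α + c * Real.sin α + 1 = 0 := by
    rw [ha, hc]; field_simp; linarith [hsinβα]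
  have keyβ : a * Real.cos β + c * Real.sin β + 1 = 0 := by
    rw [ha, hc]; field_simp; linarith [hsinβα]
  have hac : a ^ 2 + c ^ 2 ≠ 0 := by
    intro h
    have ha0 : a = 0 := by nlinarith
    have hc0 : c = 0 := by nlinarith
    rw [ha0, hc0] at keyα; norm_num at keyα
  -- the bilinear map
  set B : (Fin 3 → ℝ) →ₗ[ℝ] Module.Dual ℝ (Fin 3 → ℝ) :=
    LinearMap.mk₂ ℝ
      (fun x y => a * (x 0 * y 0 + x 1 * y 1) + c * (x 0 * y 1 - x 1 * y 0) + x 2 * y 2)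
      (fun x x' y => by simp only [Pi.add_apply]; ring)
      (fun r x y => by simp only [Pi.smul_apply, smul_eq_mul]; ring)
      (fun x y y' => by simp only [Pi.add_apply]; ring)
      (fun r x y => by simp only [Pi.smul_apply, smul_eq_mul]; ring) with hB
  have hBapply : ∀ x y : Fin 3 → ℝ,
      B x y = a * (x 0 * y 0 + x 1 * y 1) + c * (x 0 * y 1 - x 1 * y 0) + x 2 * y 2 :=
    fun x y => rfl
  have hBinj : Function.Injective B := by
    rw [← LinearMap.ker_eq_bot, LinearMap.ker_eq_bot']
    intro x hx
    have h0 := DFunLike.congr_fun hx (![1,0,0] : Fin 3 → ℝ)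
    have h1 := DFunLike.congr_fun hx (![0,1,0] : Fin 3 → ℝ)
    have h2 := DFunLike.congr_fun hx (![0,0,1] : Fin 3 → ℝ)
    rw [hBapply] at h0 h1 h2
    simp only [Matrix.cons_val_zero, Matrix.cons_val_one, Matrix.head_cons,
      Matrix.cons_val_two, Matrix.tail_cons, LinearMap.zero_apply] at h0 h1 h2
    have hacpos : 0 < a ^ 2 + c ^ 2 := lt_of_le_of_ne (by positivity) (Ne.symm hac)
    have e0 : (a ^ 2 + c ^ 2) * x 0 = 0 := by linear_combination a * h0 + c * h1
    have e1 : (a ^ 2 + c ^ 2) * x 1 = 0 := by linear_combination (-c) * h0 + a * h1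
    have hx0 : x 0 = 0 := by
      rcases mul_eq_zero.mp e0 with h | h
      · exact absurd h hac
      · exact h
    have hx1 : x 1 = 0 := by
      rcases mul_eq_zero.mp e1 with h | h
      · exact absurd h hac
      · exact h
    have hx2 : x 2 = 0 := by linarith
    funext i
    fin_cases i <;> simpa
  refine ⟨B.linearEquivOfInjective hBinj (by simp), ?_⟩
  -- evaluation formula
  have hBval : ∀ p q : ℝ,
      B ![Real.cos p, Real.sin p, 1] ![Real.cos q, Real.sin q, 1]
        = a * Real.cos (q - p) + c * Real.sin (q - p) + 1 := by
    intro p q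
    rw [hBapply, Real.cos_sub, Real.sin_sub]
    simp only [Matrix.cons_val_zero, Matrix.cons_val_one, Matrix.head_cons,
      Matrix.cons_val_two, Matrix.tail_cons]
    ring
  -- angle arithmetic
  have hangle : ∀ (j l : ZMod n),
      2 * π * ((j + l).val : ℝ) / n - 2 * π * (j.val : ℝ) / n
        = 2 * π * (l.val : ℝ) / n - ((j.val + l.val) / n : ℕ) * (2 * π) := by
    intro j l
    have hval : j.val + l.val = n * ((j.val + l.val) / n) + (j + l).val := by
      rw [ZMod.val_add]
      exact (Nat.div_add_mod _ _).symm
    have : ((j.val : ℝ) + l.val) = n * ((j.val + l.val) / n : ℕ) + ((j + l).val : ℝ) := by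
      exact_mod_cast congrArg Nat.cast hval
    have h2 : ((j + l).val : ℝ)
        = (j.val : ℝ) + l.val - n * (((j.val + l.val) / n : ℕ) : ℝ) := by linarith
    rw [h2]
    field_simp
    ring
  have hcossin : ∀ (j l : ZMod n),
      Real.cos (2 * π * ((j + l).val : ℝ) / n - 2 * π * (j.val : ℝ) / n)
        = Real.cos (2 * π * (l.val : ℝ) / n) ∧
      Real.sin (2 * π * ((j + l).val : ℝ) / n - 2 * π * (j.val : ℝ) / n)
        = Real.sin (2 * π * (l.val : ℝ) / n) := by
    intro j l
    rw [hangle j l]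
    constructor
    · rw [sub_eq_add_neg, ← neg_mul]
      exact_mod_cast Real.cos_add_int_mul_two_pi _ (-((j.val + l.val) / n : ℕ) : ℤ)
    · rw [sub_eq_add_neg, ← neg_mul]
      exact_mod_cast Real.sin_add_int_mul_two_pi _ (-((j.val + l.val) / n : ℕ) : ℤ)
  have kval : ((k' : ZMod n)).val = k' := ZMod.val_natCast_of_lt hk'n
  have k1cast : ((k' : ZMod n) + 1) = ((k' + 1 : ℕ) : ZMod n) := by push_cast; ring
  have k1val : (((k' + 1 : ℕ) : ZMod n)).val = k' + 1 := ZMod.val_natCast_of_lt hk'1n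
  intro j
  rw [LinearMap.linearEquivOfInjective_apply]
  constructor
  · rw [hv j, hv (j + (k' : ZMod n)), hBval]
    rw [(hcossin j (k' : ZMod n)).1, (hcossin j (k' : ZMod n)).2, kval]
    exact keyα
  · rw [hv j, hv (j + (k' : ZMod n) + 1), hBval]
    rw [show j + (k' : ZMod n) + 1 = j + ((k' + 1 : ℕ) : ZMod n) by rw [← k1cast]; ring]
    rw [(hcossin j ((k' + 1 : ℕ) : ZMod n)).1, (hcossin j _).2, k1val]
    calc a * Real.cos (2 * π * (↑(k' + 1) : ℝ) / n) + c * Real.sin (2 * π * (↑(k' + 1) : ℝ) / n) + 1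
        = a * Real.cos β + c * Real.sin β + 1 := by rw [hβ]; push_cast; ring_nf
      _ = 0 := keyβ
end

section
/- Every pentagon in ℂP² in general position is 5-self-dual: if v : ZMod 5 → ℂ³ \ {0} is such that any three of the vectors v 0, v 1, v 2, v 3, v 4 are linearly independent (no three vertices collinear), then there exists a linear equivalence f : ℂ³ ≃ (ℂ³)* such that f (v j)(v (j+2)) = 0 and f (v j)(v (j+3)) = 0 for every j ∈ ZMod 5. -/
/-!
A pentagon in general position is self-polar with respect to a nonsingular conic: there is a
nondegenerate symmetric bilinear form `B` with `B (v j) (v (j + 2)) = 0` for all `j`, and then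
symmetry gives `B (v j) (v (j + 3)) = 0` as well, because `j + 3 + 2 = j`.  In the basis
`v 0, v 1, v 2` these five conditions are linear equations in the six entries of a symmetric
matrix.  Writing `x, y` for the coordinates of `v 3, v 4` and `z = x × y`, an explicit solution
has determinant `(x₀ y₂ z₀ z₂)²`, and each of these four factors is a `3 × 3` minor of the
pentagon, nonzero by general position.
-/

open Matrix Module LinearMap.BilinForm
open LinearMap (BilinForm)

theorem exists_linearEquiv_dual_of_isSymm {K V : Type*} [Field K] [AddCommGroup V] [Module K V]
    [FiniteDimensional K V] {n : ℕ} (k : ZMod n) (hk : 2 * k + 1 = 0) (v : ZMod n → V)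
    (B : BilinForm K V) (hB : B.Nondegenerate) (hs : B.IsSymm)
    (h : ∀ j, B (v j) (v (j + k)) = 0) :
    ∃ f : V ≃ₗ[K] Dual K V, ∀ j, f (v j) (v (j + k)) = 0 ∧ f (v j) (v (j + k + 1)) = 0 := by
  refine ⟨B.toDual hB, fun j => ⟨?_, ?_⟩⟩
  · rw [toDual_def]
    exact h j
  · have hj : j + k + 1 + k = j := by linear_combination hk
    rw [toDual_def, hs.eq, ← h (j + k + 1), hj]

section PolarMatrix

variable {K : Type*} [Field K]

/-- A symmetric solution `N` of `N₀₂ = 0`, `N x ∈ K e₂`, `N y ∈ K e₀`. -/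
def pentagonPolarMatrix (x y : Fin 3 → K) : Matrix (Fin 3) (Fin 3) K :=
  !![-x 1 * y 2 * (x ⨯₃ y) 0, x 0 * y 2 * (x ⨯₃ y) 0, 0;
     x 0 * y 2 * (x ⨯₃ y) 0, x 0 * y 2 * (x ⨯₃ y) 1, x 0 * y 2 * (x ⨯₃ y) 2;
     0, x 0 * y 2 * (x ⨯₃ y) 2, -x 0 * y 1 * (x ⨯₃ y) 2]

variable (x y : Fin 3 → K)

lemma pentagonPolarMatrix_isSymm : (pentagonPolarMatrix x y).IsSymm := by
  ext i j
  fin_cases i <;> fin_cases j <;> rfl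

lemma det_pentagonPolarMatrix :
    (pentagonPolarMatrix x y).det = (x 0 * y 2 * (x ⨯₃ y) 0 * (x ⨯₃ y) 2) ^ 2 := by
  simp only [pentagonPolarMatrix, det_fin_three, of_apply, cons_val, cross_apply]
  ring

lemma pentagonPolarMatrix_mulVec_left :
    pentagonPolarMatrix x y *ᵥ x = ![0, 0, x 0 * (x ⨯₃ y) 0 * (x ⨯₃ y) 2] := by
  simp only [pentagonPolarMatrix, cons_mulVec, empty_mulVec, vec3_dotProduct, cons_val,
    cross_apply]
  refine vec3_eq ?_ ?_ ?_ <;> ring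

lemma pentagonPolarMatrix_mulVec_right :
    pentagonPolarMatrix x y *ᵥ y = ![y 2 * (x ⨯₃ y) 0 * (x ⨯₃ y) 2, 0, 0] := by
  simp only [pentagonPolarMatrix, cons_mulVec, empty_mulVec, vec3_dotProduct, cons_val,
    cross_apply]
  refine vec3_eq ?_ ?_ ?_ <;> ring

end PolarMatrix

lemma Matrix.IsSymm.dotProduct_mulVec_comm {R n : Type*} [CommRing R] [Fintype n]
    {N : Matrix n n R} (hN : N.IsSymm) (u w : n → R) : u ⬝ᵥ N *ᵥ w = w ⬝ᵥ N *ᵥ u := by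
  rw [dotProduct_mulVec, dotProduct_comm, ← vecMul_transpose, hN.eq]

lemma Module.Basis.dotProduct_cross_equivFun_ne_zero {K V : Type*} [Field K] [AddCommGroup V]
    [Module K V] (b : Basis (Fin 3) K V) {u₀ u₁ u₂ : V} (h : LinearIndependent K ![u₀, u₁, u₂]) :
    b.equivFun u₀ ⬝ᵥ b.equivFun u₁ ⨯₃ b.equivFun u₂ ≠ 0 := by
  have hc : LinearIndependent K (FinVec.map b.equivFun ![u₀, u₁, u₂]) := by
    rw [FinVec.map_eq]
    exact h.map' _ b.equivFun.ker
  rw [triple_product_eq_det]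
  exact ((Matrix.isUnit_iff_isUnit_det _).mp (linearIndependent_rows_iff_isUnit.mp hc)).ne_zero

theorem exists_selfPolar_matrix {K : Type*} [Field K] (c : ZMod 5 → Fin 3 → K)
    (h₀ : c 0 = Pi.single 0 1) (h₁ : c 1 = Pi.single 1 1) (h₂ : c 2 = Pi.single 2 1)
    (hgen : ∀ i j l : ZMod 5, i ≠ j → i ≠ l → j ≠ l → c i ⬝ᵥ c j ⨯₃ c l ≠ 0) :
    ∃ N : Matrix (Fin 3) (Fin 3) K, N.det ≠ 0 ∧ N.IsSymm ∧ ∀ j, c j ⬝ᵥ N *ᵥ c (j + 2) = 0 := by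
  have hx : c 3 0 ≠ 0 := by
    simpa [h₁, h₂, cross_apply] using hgen 1 2 3 (by decide) (by decide) (by decide)
  have hy : c 4 2 ≠ 0 := by
    simpa [h₀, h₁, cross_apply] using hgen 0 1 4 (by decide) (by decide) (by decide)
  have hz₀ : (c 3 ⨯₃ c 4) 0 ≠ 0 := by
    simpa [h₀] using hgen 0 3 4 (by decide) (by decide) (by decide)
  have hz₂ : (c 3 ⨯₃ c 4) 2 ≠ 0 := by
    simpa [h₂] using hgen 2 3 4 (by decide) (by decide) (by decide)
  have hs := pentagonPolarMatrix_isSymm (c 3) (c 4)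
  refine ⟨pentagonPolarMatrix (c 3) (c 4), ?_, hs, fun j => ?_⟩
  · rw [det_pentagonPolarMatrix]
    exact pow_ne_zero _ (by simp [hx, hy, hz₀, hz₂])
  obtain rfl | rfl | rfl | rfl | rfl : j = 0 ∨ j = 1 ∨ j = 2 ∨ j = 3 ∨ j = 4 := by
    revert j; decide
  · show c 0 ⬝ᵥ _ *ᵥ c 2 = 0
    simp [h₀, h₂, pentagonPolarMatrix]
  · show c 1 ⬝ᵥ _ *ᵥ c 3 = 0
    simp [h₁, pentagonPolarMatrix_mulVec_left]
  · show c 2 ⬝ᵥ _ *ᵥ c 4 = 0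
    simp [h₂, pentagonPolarMatrix_mulVec_right]
  · show c 3 ⬝ᵥ _ *ᵥ c 0 = 0
    rw [hs.dotProduct_mulVec_comm]
    simp [h₀, pentagonPolarMatrix_mulVec_left]
  · show c 4 ⬝ᵥ _ *ᵥ c 1 = 0
    rw [hs.dotProduct_mulVec_comm]
    simp [h₁, pentagonPolarMatrix_mulVec_right]

theorem exists_selfPolar_bilinForm {K V : Type*} [Field K] [AddCommGroup V] [Module K V]
    (hV : finrank K V = 3) (v : ZMod 5 → V)
    (hgen : ∀ i j l : ZMod 5, i ≠ j → i ≠ l → j ≠ l → LinearIndependent K ![v i, v j, v l]) :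
    ∃ B : BilinForm K V, B.Nondegenerate ∧ B.IsSymm ∧ ∀ j, B (v j) (v (j + 2)) = 0 := by
  let b : Basis (Fin 3) K V :=
    basisOfLinearIndependentOfCardEqFinrank (hgen 0 1 2 (by decide) (by decide) (by decide))
      (by rw [hV, Fintype.card_fin])
  have hv : ⇑b = ![v 0, v 1, v 2] := coe_basisOfLinearIndependentOfCardEqFinrank _ _
  have he : ∀ i, b.equivFun (b i) = Pi.single i 1 := fun i => by
    rw [b.equivFun_apply, b.repr_self, Finsupp.single_eq_pi_single]
  obtain ⟨N, hdet, hs, hN⟩ := exists_selfPolar_matrix (fun j => b.equivFun (v j))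
    (by simpa [hv] using he 0) (by simpa [hv] using he 1) (by simpa [hv] using he 2)
    fun i j l hij hil hjl => b.dotProduct_cross_equivFun_ne_zero (hgen i j l hij hil hjl)
  refine ⟨toBilin b N, ?_, (isSymm_toBilin_iff_isSymm b).mpr hs, fun j => ?_⟩
  · rwa [nondegenerate_toBilin_iff, Matrix.nondegenerate_iff_det_ne_zero]
  · rw [apply_eq_dotProduct_toMatrix_mulVec b, toMatrix_toBilin]
    simpa using hN j

theorem stmt_4_general (v : ZMod 5 → Fin 3 → ℂ)
    (hgen : ∀ i j l : ZMod 5, i ≠ j → i ≠ l → j ≠ l →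
      LinearIndependent ℂ ![v i, v j, v l]) :
    ∃ f : (Fin 3 → ℂ) ≃ₗ[ℂ] Module.Dual ℂ (Fin 3 → ℂ),
      ∀ j : ZMod 5, f (v j) (v (j + 2)) = 0 ∧ f (v j) (v (j + 3)) = 0 := by
  obtain ⟨B, hB, hs, h⟩ := exists_selfPolar_bilinForm (by simp) v hgen
  obtain ⟨f, hf⟩ := exists_linearEquiv_dual_of_isSymm (2 : ZMod 5) (by decide) v B hB hs h
  refine ⟨f, fun j => ?_⟩
  simpa [add_assoc, show (2 : ZMod 5) + 1 = 3 from rfl] using hf j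

/-- Every pentagon in general position is 5-self-dual. -/
theorem stmt_4 (v : ZMod 5 → Fin 3 → ℂ) (hv0 : ∀ j, v j ≠ 0)
    (hgen : ∀ i j l : ZMod 5, i ≠ j → i ≠ l → j ≠ l →
      LinearIndependent ℂ ![v i, v j, v l]) :
    ∃ f : (Fin 3 → ℂ) ≃ₗ[ℂ] Module.Dual ℂ (Fin 3 → ℂ),
      ∀ j : ZMod 5, f (v j) (v (j + 2)) = 0 ∧ f (v j) (v (j + 3)) = 0 :=
  stmt_4_general v hgen
end

section
/- If a real n-self-dual n-gon is projectively equivalent to an affine convex n-gon, then its associated symmetric bilinear form is definite. Precisely: let n ≥ 5 be odd, k := (n−1)/2, let w : ZMod n → ℝ² be the vertices of a positively oriented convex n-gon, i.e., for every j ∈ ZMod n and every l ∉ {j, j+1} one has det(w (j+1) − w j, w l − w j) > 0, and set v j := (w j, 1) ∈ ℝ³. Suppose f : ℝ³ ≃ (ℝ³)* is a linear equivalence such that the bilinear form F(x,y) := f(x)(y) is symmetric and f (v j)(v (j+k)) = 0 and f (v j)(v (j+k+1)) = 0 for all j. Then F is definite: either F or −F is positive definite on ℝ³. -/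
namespace Stmt6Aux

def det3 (a b c : Fin 3 → ℝ) : ℝ :=
  a 0 * (b 1 * c 2 - b 2 * c 1) - a 1 * (b 0 * c 2 - b 2 * c 0) + a 2 * (b 0 * c 1 - b 1 * c 0)

lemma phi_expand (φ : (Fin 3 → ℝ) →ₗ[ℝ] ℝ) (x : Fin 3 → ℝ) :
    φ x = x 0 * φ (Pi.single 0 1) + x 1 * φ (Pi.single 1 1) + x 2 * φ (Pi.single 2 1) := by
  have hx : x = x 0 • (Pi.single 0 1 : Fin 3 → ℝ) + x 1 • (Pi.single 1 1 : Fin 3 → ℝ)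
      + x 2 • (Pi.single 2 1 : Fin 3 → ℝ) := by
    funext i
    fin_cases i <;> simp
  conv_lhs => rw [hx]
  simp [smul_eq_mul]

lemma cramer_phi (φ : (Fin 3 → ℝ) →ₗ[ℝ] ℝ) (a b c x : Fin 3 → ℝ) :
    det3 a b c * φ x = det3 x b c * φ a + det3 a x c * φ b + det3 a b x * φ c := by
  rw [phi_expand φ x, phi_expand φ a, phi_expand φ b, phi_expand φ c]
  unfold det3; ring

lemma cramer_vec (a b c x : Fin 3 → ℝ) :
    det3 a b c • x = det3 x b c • a + det3 a x c • b + det3 a b x • c := by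
  funext i
  fin_cases i
  · show det3 a b c * x 0 = det3 x b c * a 0 + det3 a x c * b 0 + det3 a b x * c 0
    unfold det3; ring
  · show det3 a b c * x 1 = det3 x b c * a 1 + det3 a x c * b 1 + det3 a b x * c 1
    unfold det3; ring
  · show det3 a b c * x 2 = det3 x b c * a 2 + det3 a x c * b 2 + det3 a b x * c 2
    unfold det3; ring

lemma pluecker (a b c x y : Fin 3 → ℝ) :
    det3 a b x * det3 b c y - det3 a b y * det3 b c x = det3 a b c * det3 b x y := by
  unfold det3; ring

lemma det3_cyclic (a b c : Fin 3 → ℝ) : det3 a b c = det3 c a b := by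
  unfold det3; ring

lemma quad_pos {A B C D α β t val : ℝ} (hA : 0 < A) (hD : 0 < D)
    (hdisc : 0 < A * C - B ^ 2) (hne : ¬(α = 0 ∧ β = 0 ∧ t = 0))
    (hval : val = A * α ^ 2 + 2 * B * (α * β) + C * β ^ 2 + D * t ^ 2) : 0 < val := by
  by_cases hβ : β = 0
  · by_cases ht : t = 0
    · have hα : α ≠ 0 := fun h => hne ⟨h, hβ, ht⟩
      have : 0 < α ^ 2 := by positivity
      subst hβ ht hval
      nlinarith
    · have ht2 : 0 < t ^ 2 := by positivity
      subst hβ hval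
      nlinarith [sq_nonneg α, mul_pos hA ht2, mul_pos hD ht2]
  · have hβ2 : 0 < β ^ 2 := by positivity
    subst hval
    nlinarith [sq_nonneg (A * α + B * β), mul_pos hdisc hβ2, mul_nonneg hD.le (sq_nonneg t)]

end Stmt6Aux

open Stmt6Aux

set_option maxHeartbeats 1000000 in
/-- If a real `n`-self-dual `n`-gon is an affine convex `n`-gon, then the associated
symmetric bilinear form is definite. -/
theorem stmt_6 (n : ℕ) (hn : 5 ≤ n) (hodd : Odd n)
    (w : ZMod n → Fin 2 → ℝ)
    (hconvex : ∀ j l : ZMod n, l ≠ j → l ≠ j + 1 →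
      0 < (w (j + 1) 0 - w j 0) * (w l 1 - w j 1) - (w (j + 1) 1 - w j 1) * (w l 0 - w j 0))
    (v : ZMod n → Fin 3 → ℝ)
    (hv : ∀ j : ZMod n, v j = ![w j 0, w j 1, 1])
    (f : (Fin 3 → ℝ) ≃ₗ[ℝ] Module.Dual ℝ (Fin 3 → ℝ))
    (hsymm : ∀ x y : Fin 3 → ℝ, f x y = f y x)
    (hf : ∀ j : ZMod n,
      f (v j) (v (j + (((n - 1) / 2 : ℕ) : ZMod n))) = 0 ∧
      f (v j) (v (j + (((n - 1) / 2 : ℕ) : ZMod n) + 1)) = 0) :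
    (∀ x : Fin 3 → ℝ, x ≠ 0 → 0 < f x x) ∨ (∀ x : Fin 3 → ℝ, x ≠ 0 → f x x < 0) := by
  haveI : NeZero n := ⟨by omega⟩
  obtain ⟨m, hm⟩ := hodd
  set k : ℕ := (n - 1) / 2 with hk
  set K : ZMod n := ((k : ℕ) : ZMod n) with hK
  have hkn : n = 2 * k + 1 := by omega
  have hdvd : ∀ a : ℕ, 0 < a → a < n → ((a : ZMod n) ≠ 0) := by
    intro a ha1 ha2 h
    rw [ZMod.natCast_eq_zero_iff] at h
    exact absurd (Nat.le_of_dvd ha1 h) (by omega)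
  have h1 : (1 : ZMod n) ≠ 0 := by
    have := hdvd 1 (by omega) (by omega); simpa using this
  have h2 : (2 : ZMod n) ≠ 0 := by
    have := hdvd 2 (by omega) (by omega); push_cast at this; exact this
  have h3 : (3 : ZMod n) ≠ 0 := by
    have := hdvd 3 (by omega) (by omega); push_cast at this; exact this
  have hKK : K + K + 1 = 0 := by
    have hcast : ((2 * k + 1 : ℕ) : ZMod n) = 0 := by
      rw [← hkn]; exact ZMod.natCast_self n
    push_cast at hcast
    linear_combination hcast
  have hK0 : K ≠ 0 := by intro h; apply h1; linear_combination hKK - 2 * h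
  have hK1 : K + 1 ≠ 0 := by intro h; apply h1; linear_combination 2 * h - hKK
  have hKne1 : K ≠ 1 := by intro h; apply h3; linear_combination hKK - 2 * h
  have hK2 : K + 2 ≠ 0 := by intro h; apply h3; linear_combination 2 * h - hKK
  -- positivity of the triangle determinants from convexity
  have hμ : ∀ a l : ZMod n, l ≠ a → l ≠ a + 1 → 0 < det3 (v a) (v (a + 1)) (v l) := by
    intro a l ha ha1
    have h := hconvex a l ha ha1
    have e : det3 (v a) (v (a + 1)) (v l)
        = (w (a + 1) 0 - w a 0) * (w l 1 - w a 1) - (w (a + 1) 1 - w a 1) * (w l 0 - w a 0) := by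
      rw [hv a, hv (a + 1), hv l]
      show (w a 0) * ((w (a+1) 1) * 1 - 1 * (w l 1)) - (w a 1) * ((w (a+1) 0) * 1 - 1 * (w l 0))
          + 1 * ((w (a+1) 0) * (w l 1) - (w (a+1) 1) * (w l 0)) = _
      ring
    rw [e]; exact h
  -- the scalar factors c j with f (v j) = c j • (edge functional at j + K)
  have hcex : ∀ j : ZMod n, ∃ cj : ℝ,
      ∀ x : Fin 3 → ℝ, f (v j) x = cj * det3 (v (j + K)) (v (j + K + 1)) x := by
    intro j
    have hd : 0 < det3 (v (j + K)) (v (j + K + 1)) (v (j + K + 2)) :=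
      hμ (j + K) (j + K + 2) (by intro h; apply h2; linear_combination h)
        (by intro h; apply h1; linear_combination h)
    refine ⟨f (v j) (v (j + K + 2)) / det3 (v (j + K)) (v (j + K + 1)) (v (j + K + 2)), ?_⟩
    intro x
    have hcr := cramer_phi (f (v j)) (v (j + K)) (v (j + K + 1)) (v (j + K + 2)) x
    rw [(hf j).1, (hf j).2] at hcr
    field_simp
    linear_combination hcr
  choose c hc using hcex
  have hvne : ∀ j : ZMod n, v j ≠ 0 := by
    intro j h
    rw [hv j] at h
    have := congrFun h 2
    simp at this
  have hcne : ∀ j : ZMod n, c j ≠ 0 := by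
    intro j h0
    have hz : f (v j) = 0 := by
      apply LinearMap.ext
      intro x
      rw [hc j x, h0, zero_mul, LinearMap.zero_apply]
    exact hvne j (f.injective (hz.trans (map_zero f).symm))
  -- consecutive c's have the same sign
  have hcc : ∀ j : ZMod n, 0 < c j * c (j + 1) := by
    intro j
    have e1 := hc j (v (j + 1))
    have e2 := hc (j + 1) (v j)
    have hp : 0 < det3 (v (j + K)) (v (j + K + 1)) (v (j + 1)) :=
      hμ (j + K) (j + 1) (by intro h; apply h3; linear_combination hKK + 2 * h)
        (by intro h; apply hK0; linear_combination -h)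
    have hq : 0 < det3 (v (j + 1 + K)) (v (j + 1 + K + 1)) (v j) :=
      hμ (j + 1 + K) j (by intro h; apply hK1; linear_combination -h)
        (by intro h; apply hK2; linear_combination -h)
    have e : c j * det3 (v (j + K)) (v (j + K + 1)) (v (j + 1))
        = c (j + 1) * det3 (v (j + 1 + K)) (v (j + 1 + K + 1)) (v j) :=
      e1.symm.trans ((hsymm (v j) (v (j + 1))).trans e2)
    have h1' : 0 < (c j * c j) * det3 (v (j + K)) (v (j + K + 1)) (v (j + 1)) :=
      mul_pos (mul_self_pos.mpr (hcne j)) hp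
    have h2' : c j * (c j * det3 (v (j + K)) (v (j + K + 1)) (v (j + 1)))
        = c j * (c (j + 1) * det3 (v (j + 1 + K)) (v (j + 1 + K + 1)) (v j)) := by rw [e]
    nlinarith [h1', h2', hq]
  -- all c's have the same sign as c 0
  have hchain : ∀ a : ℕ, 0 < c 0 * c ((a : ℕ) : ZMod n) := by
    intro a
    induction a with
    | zero => simpa using mul_self_pos.mpr (hcne 0)
    | succ a ih =>
      have hstep := hcc ((a : ℕ) : ZMod n)
      have hsq := mul_self_pos.mpr (hcne ((a : ℕ) : ZMod n))
      push_cast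
      push_cast at ih
      nlinarith [hstep, hsq, ih]
  have h0K : 0 < c 0 * c K := by
    have := hchain k; rwa [← hK] at this
  have h0K1 : 0 < c 0 * c (K + 1) := by
    have := hchain (k + 1); push_cast at this; rwa [← hK] at this
  have hKK1 : 0 < c K * c (K + 1) := hcc K
  -- index rewriting
  have hidx1 : K + 1 + K = K + K + 1 := by ring
  have hidx2 : K + 1 + K + 1 = K + K + 1 + 1 := by ring
  -- determinant positivity for the final computation
  have hd1 : 0 < det3 (v (K + K)) (v (K + K + 1)) (v K) :=
    hμ (K + K) K (by intro h; apply hK0; linear_combination -h)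
      (by intro h; apply hK0; linear_combination h + hKK)
  have he1 : 0 < det3 (v (K + K + 1)) (v (K + K + 1 + 1)) (v (K + 1)) :=
    hμ (K + K + 1) (K + 1) (by intro h; apply hK0; linear_combination -h)
      (by intro h; apply hK1; linear_combination -h)
  have hdabc : 0 < det3 (v (K + K)) (v (K + K + 1)) (v (K + K + 1 + 1)) :=
    hμ (K + K) (K + K + 1 + 1) (by intro h; apply h2; linear_combination h)
      (by intro h; apply h1; linear_combination h)
  have hΔ : 0 < det3 (v K) (v (K + 1)) (v 0) :=
    hμ K 0 (Ne.symm hK0) (by intro h; apply hK1; linear_combination -h)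
  have hbxy : det3 (v (K + K + 1)) (v K) (v (K + 1)) = det3 (v K) (v (K + 1)) (v 0) := by
    rw [show (K + K + 1 : ZMod n) = 0 from hKK]
    exact (det3_cyclic (v K) (v (K + 1)) (v 0)).symm
  have hpl := pluecker (v (K + K)) (v (K + K + 1)) (v (K + K + 1 + 1)) (v K) (v (K + 1))
  rw [hbxy] at hpl
  -- values of the form at key vertices
  have hz1 : f (v 0) (v K) = 0 := by have := (hf 0).1; rwa [zero_add] at this
  have hz2 : f (v 0) (v (K + 1)) = 0 := by have := (hf 0).2; rwa [zero_add] at this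
  have hz1' : f (v K) (v 0) = 0 := (hsymm (v K) (v 0)).trans hz1
  have hz2' : f (v (K + 1)) (v 0) = 0 := (hsymm (v (K + 1)) (v 0)).trans hz2
  have hPP : f (v K) (v K) = c K * det3 (v (K + K)) (v (K + K + 1)) (v K) := hc K (v K)
  have hPQ : f (v K) (v (K + 1)) = c K * det3 (v (K + K)) (v (K + K + 1)) (v (K + 1)) :=
    hc K (v (K + 1))
  have hQQ : f (v (K + 1)) (v (K + 1))
      = c (K + 1) * det3 (v (K + K + 1)) (v (K + K + 1 + 1)) (v (K + 1)) := by
    have h := hc (K + 1) (v (K + 1)); rwa [hidx1] at h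
  have hQP : f (v K) (v (K + 1))
      = c (K + 1) * det3 (v (K + K + 1)) (v (K + K + 1 + 1)) (v K) := by
    have h := hc (K + 1) (v K)
    rw [hidx1] at h
    rw [hsymm (v K) (v (K + 1))]
    exact h
  have hRR : f (v 0) (v 0) = c 0 * det3 (v K) (v (K + 1)) (v 0) := by
    have h := hc 0 (v 0)
    rwa [show (0 : ZMod n) + K = K from zero_add K] at h
  have hB2 : f (v K) (v (K + 1)) ^ 2
      = (c K * det3 (v (K + K)) (v (K + K + 1)) (v (K + 1)))
        * (c (K + 1) * det3 (v (K + K + 1)) (v (K + K + 1 + 1)) (v K)) := by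
    linear_combination (f (v K) (v (K + 1))) * hPQ
      + (c K * det3 (v (K + K)) (v (K + K + 1)) (v (K + 1))) * hQP
  have hACB : f (v K) (v K) * f (v (K + 1)) (v (K + 1)) - f (v K) (v (K + 1)) ^ 2
      = (c K * c (K + 1))
        * (det3 (v (K + K)) (v (K + K + 1)) (v (K + K + 1 + 1)) * det3 (v K) (v (K + 1)) (v 0)) := by
    rw [hPP, hQQ, hB2]
    linear_combination (c K * c (K + 1)) * hpl
  -- core positivity
  have key : ∀ x : Fin 3 → ℝ, x ≠ 0 → 0 < c 0 * f x x := by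
    intro x hx
    have hxc := cramer_vec (v K) (v (K + 1)) (v 0) x
    set Δ : ℝ := det3 (v K) (v (K + 1)) (v 0) with hΔdef
    set α : ℝ := det3 x (v (K + 1)) (v 0) with hα
    set β : ℝ := det3 (v K) x (v 0) with hβ
    set t : ℝ := det3 (v K) (v (K + 1)) x with ht
    have hne : ¬(α = 0 ∧ β = 0 ∧ t = 0) := by
      rintro ⟨ha, hb, htt⟩
      rw [ha, hb, htt] at hxc
      simp at hxc
      rcases hxc with h | h
      · exact hΔ.ne' h
      · exact hx h
    have hEval : Δ ^ 2 * f x x =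
        f (v K) (v K) * α ^ 2 + 2 * (f (v K) (v (K + 1))) * (α * β)
        + f (v (K + 1)) (v (K + 1)) * β ^ 2 + f (v 0) (v 0) * t ^ 2 := by
      have e0 : f (Δ • x) (Δ • x) = Δ ^ 2 * f x x := by
        rw [map_smul]
        simp only [LinearMap.smul_apply, map_smul, smul_eq_mul]
        ring
      rw [hxc] at e0
      simp only [map_add, map_smul, LinearMap.add_apply, LinearMap.smul_apply,
        smul_eq_mul] at e0
      rw [hz1, hz2, hz1', hz2', hsymm (v (K + 1)) (v K)] at e0
      linear_combination -e0
    have hdisc : 0 < (c 0 * f (v K) (v K)) * (c 0 * f (v (K + 1)) (v (K + 1)))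
        - (c 0 * f (v K) (v (K + 1))) ^ 2 := by
      have hpos : 0 < (c 0 * c 0) * ((c K * c (K + 1))
          * (det3 (v (K + K)) (v (K + K + 1)) (v (K + K + 1 + 1)) * Δ)) :=
        mul_pos (mul_self_pos.mpr (hcne 0)) (mul_pos hKK1 (mul_pos hdabc hΔ))
      have heq : (c 0 * f (v K) (v K)) * (c 0 * f (v (K + 1)) (v (K + 1)))
          - (c 0 * f (v K) (v (K + 1))) ^ 2
          = (c 0 * c 0) * ((c K * c (K + 1))
            * (det3 (v (K + K)) (v (K + K + 1)) (v (K + K + 1 + 1)) * Δ)) := by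
        linear_combination (c 0 * c 0) * hACB
      rw [heq]; exact hpos
    have hA' : 0 < c 0 * f (v K) (v K) := by
      rw [hPP]; nlinarith [h0K, hd1]
    have hD' : 0 < c 0 * f (v 0) (v 0) := by
      rw [hRR]; nlinarith [mul_self_pos.mpr (hcne 0), hΔ]
    have hval : Δ ^ 2 * (c 0 * f x x) = (c 0 * f (v K) (v K)) * α ^ 2
        + 2 * (c 0 * f (v K) (v (K + 1))) * (α * β)
        + (c 0 * f (v (K + 1)) (v (K + 1))) * β ^ 2
        + (c 0 * f (v 0) (v 0)) * t ^ 2 := by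
      linear_combination (c 0) * hEval
    have hpos2 : 0 < Δ ^ 2 * (c 0 * f x x) := quad_pos hA' hD' hdisc hne hval
    nlinarith [hpos2, sq_nonneg Δ, hΔ]
  rcases (hcne 0).lt_or_gt with hneg | hposc
  · right; intro x hx; nlinarith [key x hx, hneg]
  · left; intro x hx; nlinarith [key x hx, hposc]
end

section
/- Let v : ZMod n → ℂ³ \ {0} be a nondegenerate n-gon (n ≥ 3), m odd with 1 ≤ m ≤ n, k := (m−1)/2 in ZMod n, and let f : ℂ³ ≃ (ℂ³)* satisfy f (v j)(v (j+k)) = 0 and f (v j)(v (j+k+1)) = 0 for all j. Define fᵀ : ℂ³ → (ℂ³)* by fᵀ(x)(y) := f(y)(x). Then for every j ∈ ZMod n there exists a nonzero scalar c ∈ ℂ such that fᵀ(v (j+m)) = c • f (v j); equivalently, the projective transformation G of ℂP² induced by the linear isomorphism (fᵀ)⁻¹ ∘ f maps the vertex ℂ·v j to the vertex ℂ·v (j+m) for every j (in the paper's notation, G(A_i) = A_{i+2m}). -/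
/-- The projective transformation `G = (fᵀ)⁻¹ ∘ f` associated with an `m`-self-dual `n`-gon
shifts the vertices: `G(A_i) = A_{i+2m}`, i.e. `fᵀ(v (j+m))` is proportional to `f (v j)`. -/
theorem stmt_7 (n m : ℕ) (hn : 3 ≤ n) (hmodd : Odd m) (hm1 : 1 ≤ m) (hmn : m ≤ n)
    (v : ZMod n → Fin 3 → ℂ) (hv0 : ∀ j, v j ≠ 0)
    (hnd : ∀ j : ZMod n, LinearIndependent ℂ ![v (j - 1), v j, v (j + 1)])
    (f : (Fin 3 → ℂ) ≃ₗ[ℂ] Module.Dual ℂ (Fin 3 → ℂ))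
    (hf : ∀ j : ZMod n,
      f (v j) (v (j + (((m - 1) / 2 : ℕ) : ZMod n))) = 0 ∧
      f (v j) (v (j + (((m - 1) / 2 : ℕ) : ZMod n) + 1)) = 0) :
    ∀ j : ZMod n, ∃ c : ℂ, c ≠ 0 ∧
      LinearMap.flip (f.toLinearMap) (v (j + (m : ZMod n))) = c • (f (v j)) := by
  obtain ⟨t, ht⟩ := hmodd
  have hk : (m - 1) / 2 = t := by omega
  simp only [hk] at hf
  have hcast : (m : ZMod n) = (t : ZMod n) + (t : ZMod n) + 1 := by
    have hm : m = t + t + 1 := by omega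
    rw [hm]; push_cast; ring
  intro j
  set φ : Module.Dual ℂ (Fin 3 → ℂ) := f (v j) with hφdef
  set ψ : Module.Dual ℂ (Fin 3 → ℂ) :=
    LinearMap.flip (f.toLinearMap) (v (j + (m : ZMod n))) with hψdef
  -- the basis from nondegeneracy at j + t
  have hli := hnd (j + (t : ZMod n))
  let B := basisOfLinearIndependentOfCardEqFinrank hli (by simp)
  have hB : ⇑B = ![v (j + t - 1), v (j + t), v (j + t + 1)] :=
    coe_basisOfLinearIndependentOfCardEqFinrank hli _
  have hφ1 : φ (v (j + t)) = 0 := (hf j).1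
  have hφ2 : φ (v (j + t + 1)) = 0 := (hf j).2
  have hjm1 : j + (m : ZMod n) = (j + t) + t + 1 := by rw [hcast]; ring
  have hjm2 : j + (m : ZMod n) = (j + t + 1) + t := by rw [hcast]; ring
  have hψ1 : ψ (v (j + t)) = 0 := by
    have := (hf (j + t)).2
    simpa [hψdef, LinearMap.flip_apply, hjm1, add_assoc] using this
  have hψ2 : ψ (v (j + t + 1)) = 0 := by
    have := (hf (j + t + 1)).1
    simpa [hψdef, LinearMap.flip_apply, hjm2] using this
  have hφ0 : φ (v (j + t - 1)) ≠ 0 := by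
    intro h0
    have hφz : φ = 0 := by
      apply B.ext
      intro i
      fin_cases i <;>
        simp_all [hB, Matrix.cons_val_zero, Matrix.cons_val_one, Matrix.head_cons]
    have : v j = 0 := by
      have := hφz
      rw [hφdef] at this
      exact f.map_eq_zero_iff.mp this
    exact hv0 j this
  have hψ0 : ψ (v (j + t - 1)) ≠ 0 := by
    intro h0
    have hψz : ψ = 0 := by
      apply B.ext
      intro i
      fin_cases i <;>
        simp_all [hB, Matrix.cons_val_zero, Matrix.cons_val_one, Matrix.head_cons]
    have hall : ∀ g : Module.Dual ℂ (Fin 3 → ℂ), g (v (j + (m : ZMod n))) = 0 := by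
      intro g
      have := congrArg (fun L => L (f.symm g)) hψz
      simpa [hψdef, LinearMap.flip_apply] using this
    have : v (j + (m : ZMod n)) = 0 :=
      (Module.forall_dual_apply_eq_zero_iff ℂ _).mp hall
    exact hv0 _ this
  refine ⟨ψ (v (j + t - 1)) / φ (v (j + t - 1)), div_ne_zero hψ0 hφ0, ?_⟩
  apply B.ext
  intro i
  fin_cases i <;>
    simp_all [hB, Matrix.cons_val_zero, Matrix.cons_val_one, Matrix.head_cons,
      div_mul_cancel₀]
end

section
/- Let J = [[1, 1, 0], [−1, 0, 0], [0, 0, 1]] and K = [[1, 1, 0], [−1, 0, 1], [0, 1, 0]], as matrices in GL₃(ℂ). Then the projective transformations of ℂP² induced by J⁻¹·Jᵀ and by K⁻¹·Kᵀ have infinite order: for every integer s ≥ 1, neither (J⁻¹·Jᵀ)^s nor (K⁻¹·Kᵀ)^s is a scalar multiple of the identity matrix. -/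
/-!
`J⁻¹Jᵀ = diag(-1, -1, 1) + 2 E₁₀` and `K⁻¹Kᵀ` is unipotent, so their `s`-th powers have an
off-diagonal entry `±2s`, nonzero for `s ≥ 1` in characteristic zero; scalar matrices are diagonal.
-/

open Matrix

lemma Matrix.ne_smul_one_of_apply_ne_zero {n R : Type*} [DecidableEq n] [MulZeroOneClass R]
    {M : Matrix n n R} {i j : n} (hij : i ≠ j) (hM : M i j ≠ 0) (c : R) : M ≠ c • 1 := by
  rintro rfl
  simp [one_apply_ne hij] at hM

section

variable {R : Type*} [CommRing R]

lemma mul_transform_J_eq_transpose :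
    (!![1, 1, 0; -1, 0, 0; 0, 0, 1] : Matrix (Fin 3) (Fin 3) R) * !![-1, 0, 0; 2, -1, 0; 0, 0, 1]
      = (!![1, 1, 0; -1, 0, 0; 0, 0, 1] : Matrix (Fin 3) (Fin 3) R)ᵀ := by
  rw [mul_fin_three]
  ext i j; fin_cases i <;> fin_cases j <;> norm_num

lemma mul_transform_K_eq_transpose :
    (!![1, 1, 0; -1, 0, 1; 0, 1, 0] : Matrix (Fin 3) (Fin 3) R) * !![1, -2, 0; 0, 1, 0; 2, -2, 1]
      = (!![1, 1, 0; -1, 0, 1; 0, 1, 0] : Matrix (Fin 3) (Fin 3) R)ᵀ := by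
  rw [mul_fin_three]
  ext i j; fin_cases i <;> fin_cases j <;> norm_num

lemma inv_mul_transpose_J :
    (!![1, 1, 0; -1, 0, 0; 0, 0, 1] : Matrix (Fin 3) (Fin 3) R)⁻¹
        * (!![1, 1, 0; -1, 0, 0; 0, 0, 1] : Matrix (Fin 3) (Fin 3) R)ᵀ
      = !![-1, 0, 0; 2, -1, 0; 0, 0, 1] := by
  have hdet : IsUnit (!![1, 1, 0; -1, 0, 0; 0, 0, 1] : Matrix (Fin 3) (Fin 3) R).det := by
    simp [det_fin_three]
  rw [← mul_transform_J_eq_transpose, nonsing_inv_mul_cancel_left _ _ hdet]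

lemma inv_mul_transpose_K :
    (!![1, 1, 0; -1, 0, 1; 0, 1, 0] : Matrix (Fin 3) (Fin 3) R)⁻¹
        * (!![1, 1, 0; -1, 0, 1; 0, 1, 0] : Matrix (Fin 3) (Fin 3) R)ᵀ
      = !![1, -2, 0; 0, 1, 0; 2, -2, 1] := by
  have hdet : IsUnit (!![1, 1, 0; -1, 0, 1; 0, 1, 0] : Matrix (Fin 3) (Fin 3) R).det := by
    simp [det_fin_three]
  rw [← mul_transform_K_eq_transpose, nonsing_inv_mul_cancel_left _ _ hdet]

lemma pow_transform_J (s : ℕ) :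
    (!![-1, 0, 0; 2, -1, 0; 0, 0, 1] : Matrix (Fin 3) (Fin 3) R) ^ s
      = !![(-1) ^ s, 0, 0; -(-1) ^ s * (2 * (s : R)), (-1) ^ s, 0; 0, 0, 1] := by
  induction s with
  | zero => simp [one_fin_three]
  | succ n ih =>
    rw [pow_succ, ih, mul_fin_three]
    ext i j; fin_cases i <;> fin_cases j <;> simp [pow_succ]
    ring

lemma pow_transform_K (s : ℕ) :
    (!![1, -2, 0; 0, 1, 0; 2, -2, 1] : Matrix (Fin 3) (Fin 3) R) ^ s
      = !![1, -2 * (s : R), 0; 0, 1, 0; 2 * (s : R), -2 * (s : R) ^ 2, 1] := by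
  induction s with
  | zero => simp [one_fin_three]
  | succ n ih =>
    rw [pow_succ, ih, mul_fin_three]
    ext i j; fin_cases i <;> fin_cases j <;> simp <;> ring

end

/-- The projective transformations induced by `J⁻¹Jᵀ` and `K⁻¹Kᵀ` have infinite order:
no positive power of either matrix is a scalar multiple of the identity. -/
theorem stmt_10 (J K : Matrix (Fin 3) (Fin 3) ℂ)
    (hJ : J = !![1, 1, 0; -1, 0, 0; 0, 0, 1])
    (hK : K = !![1, 1, 0; -1, 0, 1; 0, 1, 0]) :
    ∀ s : ℕ, 1 ≤ s →
      (∀ c : ℂ, (J⁻¹ * J.transpose) ^ s ≠ c • (1 : Matrix (Fin 3) (Fin 3) ℂ)) ∧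
      (∀ c : ℂ, (K⁻¹ * K.transpose) ^ s ≠ c • (1 : Matrix (Fin 3) (Fin 3) ℂ)) := by
  intro s hs
  subst hJ hK
  rw [inv_mul_transpose_J, inv_mul_transpose_K, pow_transform_J, pow_transform_K]
  have hs₀ : s ≠ 0 := Nat.one_le_iff_ne_zero.mp hs
  exact ⟨ne_smul_one_of_apply_ne_zero (i := 1) (j := 0) (by decide) (by simp [hs₀]),
    ne_smul_one_of_apply_ne_zero (i := 2) (j := 0) (by decide) (by simp [hs₀])⟩
end

section
/- Let v : ZMod n → ℂ³ \ {0} be a nondegenerate n-gon (n ≥ 3) and suppose there are k ∈ ZMod n and a linear equivalence f : ℂ³ ≃ (ℂ³)* with f (v j)(v (j+k)) = 0 and f (v j)(v (j+k+1)) = 0 for all j. Then for every integer s ≥ 1 there exists a linear equivalence f_s : ℂ³ ≃ (ℂ³)* with f_s (v j)(v (j+k')) = 0 and f_s (v j)(v (j+k'+1)) = 0 for all j, where k' := k + s·(2k+1) in ZMod n. (In the paper's terms: every m-self-dual n-gon is also m'-self-dual for every m' ≡ e·m with e odd.) -/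
/-!
Write `B x y = f x y`. For every `j`, both `B (v j) ·` and `B · (v (j + 2k + 1))` vanish on the
independent vectors `v (j + k)`, `v (j + k + 1)`, so in a 3-dimensional space they are
proportional. Hence `S = (B.flip)⁻¹ ∘ B` sends each vertex `v j` into the line of
`v (j + 2k + 1)`, and `B ∘ S ^ s` is a self-duality with shift `k + s (2k + 1)`.
-/

open Module

variable {K V : Type*} [Field K] [AddCommGroup V] [Module K V]

lemma Module.Basis.exists_eq_smul_of_apply_eq_zero {ι : Type*} (b : Basis ι K V) (i₀ : ι)
    {φ ψ : Dual K V} (hψ : ψ ≠ 0) (hφb : ∀ i ≠ i₀, φ (b i) = 0) (hψb : ∀ i ≠ i₀, ψ (b i) = 0) :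
    ∃ c : K, φ = c • ψ := by
  have hψi₀ : ψ (b i₀) ≠ 0 := fun h ↦ hψ <| b.ext fun i ↦ by
    by_cases hi : i = i₀
    · simp [hi, h]
    · simp [hψb i hi]
  refine ⟨φ (b i₀) / ψ (b i₀), b.ext fun i ↦ ?_⟩
  by_cases hi : i = i₀
  · subst hi
    simp [hψi₀]
  · simp [hφb i hi, hψb i hi]

lemma exists_eq_smul_of_apply_eq_zero_of_linearIndependent (hV : finrank K V = 3) {x y z : V}
    (hxyz : LinearIndependent K ![x, y, z]) {φ ψ : Dual K V} (hψ : ψ ≠ 0)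
    (hφx : φ x = 0) (hφy : φ y = 0) (hψx : ψ x = 0) (hψy : ψ y = 0) : ∃ c : K, φ = c • ψ := by
  let b := basisOfLinearIndependentOfCardEqFinrank hxyz (by simp [hV])
  refine b.exists_eq_smul_of_apply_eq_zero 2 hψ ?_ ?_ <;>
    intro i hi <;> fin_cases i <;> simp_all [b]

section Polygon

variable {n : ℕ} (v : ZMod n → V)

def IsSelfDuality (f : V ≃ₗ[K] Dual K V) (k : ZMod n) : Prop :=
  ∀ j, f (v j) (v (j + k)) = 0 ∧ f (v j) (v (j + k + 1)) = 0

def ShiftsVertices (S : V ≃ₗ[K] V) (d : ZMod n) : Prop :=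
  ∀ j, ∃ c : K, S (v j) = c • v (j + d)

variable {v}

lemma ShiftsVertices.pow {S : V ≃ₗ[K] V} {d : ZMod n} (hS : ShiftsVertices v S d) (s : ℕ) :
    ShiftsVertices v (S ^ s) (s • d) := by
  induction s with
  | zero => exact fun j ↦ ⟨1, by simp⟩
  | succ s ih =>
    intro j
    obtain ⟨c, hc⟩ := hS j
    obtain ⟨c', hc'⟩ := ih (j + d)
    refine ⟨c * c', ?_⟩
    rw [pow_succ, LinearEquiv.mul_apply, hc, map_smul, hc', smul_smul, succ_nsmul', add_assoc]

lemma IsSelfDuality.trans {f : V ≃ₗ[K] Dual K V} {k : ZMod n} (hf : IsSelfDuality v f k)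
    {S : V ≃ₗ[K] V} {d : ZMod n} (hS : ShiftsVertices v S d) :
    IsSelfDuality v (S.trans f) (k + d) := by
  intro j
  obtain ⟨c, hc⟩ := hS j
  simp only [LinearEquiv.trans_apply, hc, map_smul, LinearMap.smul_apply, smul_eq_mul]
  rw [← add_assoc, add_right_comm j, (hf (j + d)).1, (hf (j + d)).2]
  simp

lemma IsSelfDuality.exists_shiftsVertices (hV : finrank K V = 3)
    (hnd : ∀ j : ZMod n, LinearIndependent K ![v (j - 1), v j, v (j + 1)])
    {f : V ≃ₗ[K] Dual K V} {k : ZMod n} (hf : IsSelfDuality v f k) :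
    ∃ S : V ≃ₗ[K] V, ShiftsVertices v S (2 * k + 1) := by
  have : FiniteDimensional K V := Module.finite_of_finrank_eq_succ hV
  let g : V ≃ₗ[K] Dual K V := .ofBijective (f : V →ₗ[K] Dual K V).flip
    (LinearMap.flip_bijective_iff₁.mpr f.bijective)
  have hfg : ∀ j, ∃ c : K, f (v j) = c • g (v (j + (2 * k + 1))) := by
    intro j
    have hv : v (j + (2 * k + 1)) ≠ 0 := by simpa using (hnd (j + (2 * k + 1))).ne_zero 1
    have e₁ : j + (2 * k + 1) = j + k + k + 1 := by ring
    have e₂ : j + k + 1 + k = j + (2 * k + 1) := by ring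
    refine exists_eq_smul_of_apply_eq_zero_of_linearIndependent hV (hnd (j + k + 1))
      (g.map_ne_zero_iff.mpr hv) ?_ (hf j).2 ?_ ?_
    · simpa using (hf j).1
    · simpa [g, e₁] using (hf (j + k)).2
    · simpa [g, e₂] using (hf (j + k + 1)).1
  refine ⟨f.trans g.symm, fun j ↦ ?_⟩
  obtain ⟨c, hc⟩ := hfg j
  exact ⟨c, by simp [hc]⟩

end Polygon

theorem stmt_11_general (n : ℕ)
    (v : ZMod n → Fin 3 → ℂ)
    (hnd : ∀ j : ZMod n, LinearIndependent ℂ ![v (j - 1), v j, v (j + 1)])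
    (k : ZMod n)
    (f : (Fin 3 → ℂ) ≃ₗ[ℂ] Module.Dual ℂ (Fin 3 → ℂ))
    (hf : ∀ j : ZMod n, f (v j) (v (j + k)) = 0 ∧ f (v j) (v (j + k + 1)) = 0) :
    ∀ s : ℕ, 1 ≤ s →
      ∃ fs : (Fin 3 → ℂ) ≃ₗ[ℂ] Module.Dual ℂ (Fin 3 → ℂ),
        ∀ j : ZMod n,
          fs (v j) (v (j + (k + (s : ZMod n) * (2 * k + 1)))) = 0 ∧
          fs (v j) (v (j + (k + (s : ZMod n) * (2 * k + 1)) + 1)) = 0 := by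
  intro s _
  obtain ⟨S, hS⟩ := IsSelfDuality.exists_shiftsVertices (by simp) hnd hf
  have hfs : IsSelfDuality v ((S ^ s).trans f) (k + s • (2 * k + 1)) :=
    IsSelfDuality.trans hf (hS.pow s)
  rw [nsmul_eq_mul] at hfs
  exact ⟨(S ^ s).trans f, hfs⟩

/-- A self-dual polygon with shift `k` is also self-dual with shift `k' = k + s(2k+1)`
for every `s ≥ 1` (every `m`-self-dual `n`-gon is `m'`-self-dual for `m' ≡ em`, `e` odd). -/
theorem stmt_11 (n : ℕ) (hn : 3 ≤ n)
    (v : ZMod n → Fin 3 → ℂ) (hv0 : ∀ j, v j ≠ 0)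
    (hnd : ∀ j : ZMod n, LinearIndependent ℂ ![v (j - 1), v j, v (j + 1)])
    (k : ZMod n)
    (f : (Fin 3 → ℂ) ≃ₗ[ℂ] Module.Dual ℂ (Fin 3 → ℂ))
    (hf : ∀ j : ZMod n, f (v j) (v (j + k)) = 0 ∧ f (v j) (v (j + k + 1)) = 0) :
    ∀ s : ℕ, 1 ≤ s →
      ∃ fs : (Fin 3 → ℂ) ≃ₗ[ℂ] Module.Dual ℂ (Fin 3 → ℂ),
        ∀ j : ZMod n,
          fs (v j) (v (j + (k + (s : ZMod n) * (2 * k + 1)))) = 0 ∧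
          fs (v j) (v (j + (k + (s : ZMod n) * (2 * k + 1)) + 1)) = 0 :=
  stmt_11_general n v hnd k f hf
end

section
/- Let n ≥ 3 be odd and let v : ZMod n → ℂ³ \ {0} be a nondegenerate n-gon which is self-dual with some shift k ∈ ZMod n, i.e., there is a linear equivalence f : ℂ³ ≃ (ℂ³)* with f (v j)(v (j+k)) = 0 and f (v j)(v (j+k+1)) = 0 for all j. Then v is n-self-dual: there exists a linear equivalence f' : ℂ³ ≃ (ℂ³)* with f' (v j)(v (j+(n−1)/2)) = 0 and f' (v j)(v (j+(n+1)/2)) = 0 for all j ∈ ZMod n. -/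
set_option maxHeartbeats 1000000 in

/-- For odd `n`, a nondegenerate `n`-gon self-dual with some shift `k` is `n`-self-dual. -/
theorem stmt_12 (n : ℕ) (hn : 3 ≤ n) (hodd : Odd n)
    (v : ZMod n → Fin 3 → ℂ) (hv0 : ∀ j, v j ≠ 0)
    (hnd : ∀ j : ZMod n, LinearIndependent ℂ ![v (j - 1), v j, v (j + 1)])
    (k : ZMod n)
    (f : (Fin 3 → ℂ) ≃ₗ[ℂ] Module.Dual ℂ (Fin 3 → ℂ))
    (hf : ∀ j : ZMod n, f (v j) (v (j + k)) = 0 ∧ f (v j) (v (j + k + 1)) = 0) :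
    ∃ f' : (Fin 3 → ℂ) ≃ₗ[ℂ] Module.Dual ℂ (Fin 3 → ℂ),
      ∀ j : ZMod n,
        f' (v j) (v (j + (((n - 1) / 2 : ℕ) : ZMod n))) = 0 ∧
        f' (v j) (v (j + (((n + 1) / 2 : ℕ) : ZMod n))) = 0 := by
  -- the "transpose" of f
  let g : (Fin 3 → ℂ) ≃ₗ[ℂ] Module.Dual ℂ (Fin 3 → ℂ) :=
    (Module.evalEquiv ℂ (Fin 3 → ℂ)).trans f.dualMap
  have hg : ∀ x y, g x y = f y x := fun x y => rfl
  let T : (Fin 3 → ℂ) ≃ₗ[ℂ] (Fin 3 → ℂ) := f.trans g.symm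
  -- T shifts each vertex line by 2k+1
  have hTv : ∀ j : ZMod n, ∃ c : ℂ, c ≠ 0 ∧ T (v j) = c • v (j + (2 * k + 1)) := by
    intro j
    set i := j + k with hi
    let b := basisOfLinearIndependentOfCardEqFinrank (hnd i)
      (by simp : Fintype.card (Fin 3) = Module.finrank ℂ (Fin 3 → ℂ))
    have hb : ⇑b = ![v (i - 1), v i, v (i + 1)] :=
      coe_basisOfLinearIndependentOfCardEqFinrank _ _
    set φ : Module.Dual ℂ (Fin 3 → ℂ) := f (v j) with hφ
    set ψ : Module.Dual ℂ (Fin 3 → ℂ) := g (v (j + (2 * k + 1))) with hψ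
    have hφ0 : φ (v i) = 0 := (hf j).1
    have hφ1 : φ (v (i + 1)) = 0 := (hf j).2
    have hψ0 : ψ (v i) = 0 := by
      have := (hf i).2
      rw [hψ, hg]
      convert this using 3
      ring
    have hψ1 : ψ (v (i + 1)) = 0 := by
      have := (hf (i + 1)).1
      rw [hψ, hg]
      convert this using 3
      ring
    have hφne : φ ≠ 0 := by
      simp only [hφ, ne_eq, LinearEquiv.map_eq_zero_iff]
      exact hv0 j
    have hψne : ψ ≠ 0 := by
      simp only [hψ, ne_eq, LinearEquiv.map_eq_zero_iff]
      exact hv0 _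
    have hψb : ψ (v (i - 1)) ≠ 0 := by
      intro h
      apply hψne
      apply b.ext
      intro t
      fin_cases t <;> simp [hb, h, hψ0, hψ1]
    have hφb : φ (v (i - 1)) ≠ 0 := by
      intro h
      apply hφne
      apply b.ext
      intro t
      fin_cases t <;> simp [hb, h, hφ0, hφ1]
    set c := φ (v (i - 1)) / ψ (v (i - 1)) with hc
    have hcne : c ≠ 0 := div_ne_zero hφb hψb
    have hφψ : φ = c • ψ := by
      apply b.ext
      intro t
      fin_cases t <;> simp [hb, hφ0, hφ1, hψ0, hψ1]
      rw [hc, div_mul_cancel₀ _ hψb]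
    refine ⟨c, hcne, ?_⟩
    have hTφ : T (v j) = g.symm φ := rfl
    rw [hTφ, hφψ, map_smul, hψ, g.symm_apply_apply]
  -- iterates of T
  have hTpow : ∀ (m : ℕ) (j : ZMod n), ∃ c : ℂ, c ≠ 0 ∧
      (T ^ m) (v j) = c • v (j + (m : ZMod n) * (2 * k + 1)) := by
    intro m
    induction m with
    | zero => intro j; exact ⟨1, one_ne_zero, by simp⟩
    | succ m ih =>
      intro j
      obtain ⟨c, hc, hT⟩ := ih j
      obtain ⟨d, hd, hTd⟩ := hTv (j + (m : ZMod n) * (2 * k + 1))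
      refine ⟨d * c, mul_ne_zero hd hc, ?_⟩
      have hpow : (T ^ (m + 1)) (v j) = T ((T ^ m) (v j)) := by
        rw [pow_succ']
        rfl
      rw [hpow, hT, map_smul, hTd, smul_smul, mul_comm c d]
      congr 2
      push_cast
      ring
  -- key index arithmetic
  set mz : ZMod n := (((n - 1) / 2 : ℕ) : ZMod n) with hmz
  have h2mz : 2 * mz + 1 = 0 := by
    have hnat : (2 * ((n - 1) / 2) + 1 : ℕ) = n := by
      obtain ⟨t, ht⟩ := hodd
      omega
    have h0 : ((2 * ((n - 1) / 2) + 1 : ℕ) : ZMod n) = 0 := by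
      rw [hnat]; exact ZMod.natCast_self n
    rw [hmz]
    exact_mod_cast h0
  have hmz1 : (((n + 1) / 2 : ℕ) : ZMod n) = mz + 1 := by
    have : ((n + 1) / 2 : ℕ) = (n - 1) / 2 + 1 := by
      obtain ⟨t, ht⟩ := hodd
      omega
    rw [this]
    push_cast
    rfl
  refine ⟨(T ^ ((n - 1) / 2)).trans f, fun j => ?_⟩
  obtain ⟨c, hc, hT⟩ := hTpow ((n - 1) / 2) j
  have hidx1 : j + mz = (j + mz * (2 * k + 1)) + k := by
    linear_combination (-k) * h2mz
  have hidx2 : j + (((n + 1) / 2 : ℕ) : ZMod n) = (j + mz * (2 * k + 1)) + k + 1 := by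
    rw [hmz1]
    linear_combination (-k) * h2mz
  constructor
  · rw [LinearEquiv.trans_apply, hT, map_smul, ← hmz, hidx1]
    simp [(hf (j + mz * (2 * k + 1))).1]
  · rw [LinearEquiv.trans_apply, hT, map_smul, ← hmz, hidx2]
    simp [(hf (j + mz * (2 * k + 1))).2]
end

section
/- Let γ : ℝ → ℝ³ be a C¹ curve with γ(t) and γ'(t) linearly independent for every t, let φ : ℝ → ℝ be C¹ with φ'(t) ≠ 0 for all t, and let f : ℝ³ ≃ (ℝ³)* be a linear equivalence such that for every t the functional f(γ(φ(t))) vanishes on γ(t) and on γ'(t). Define fᵀ : ℝ³ → (ℝ³)* by fᵀ(x)(y) := f(y)(x). Then for every t there is a nonzero scalar c ∈ ℝ with fᵀ(γ(t)) = c • f(γ(φ(φ(t)))); equivalently, the projective transformation G of ℝP² induced by f⁻¹ ∘ fᵀ satisfies G(γ(t)) = γ(φ²(t)) projectively for every t. -/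
/-!
Differentiating the incidence `f(γ(φ s))(γ s) = 0` and using `f(γ(φ s))(γ' s) = 0` together with
`φ' ≠ 0` gives `f(γ'(φ s))(γ s) = 0`. Hence `fᵀ(γ t)` vanishes on `γ(φ t)` and `γ'(φ t)`, as does
`f(γ(φ(φ t)))` by the hypothesis at `φ t`. Both are nonzero functionals in the annihilator of a
plane in a 3-space, which is a line, so they are proportional.
-/

open Module

section LinearAlgebra

variable {K V : Type*} [Field K] [AddCommGroup V] [Module K V]

theorem Submodule.mem_dualAnnihilator_span_range_iff {ι : Type*} (v : ι → V) (ψ : Dual K V) :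
    ψ ∈ (span K (Set.range v)).dualAnnihilator ↔ ∀ i, ψ (v i) = 0 := by
  rw [← SetLike.mem_coe, coe_dualAnnihilator_span]
  exact Set.range_subset_iff

theorem LinearEquiv.flip_apply_ne_zero (e : V ≃ₗ[K] Dual K V) {x : V} (hx : x ≠ 0) :
    e.toLinearMap.flip x ≠ 0 := by
  intro h
  refine hx ((forall_dual_apply_eq_zero_iff K x).mp fun ψ => ?_)
  simpa using LinearMap.congr_fun h (e.symm ψ)

theorem exists_ne_zero_smul_eq_of_mem_dualAnnihilator [FiniteDimensional K V] {W : Subspace K V}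
    (hW : finrank K W + 1 = finrank K V) {ψ₁ ψ₂ : Dual K V}
    (h₁ : ψ₁ ∈ W.dualAnnihilator) (h₂ : ψ₂ ∈ W.dualAnnihilator) (hψ₁ : ψ₁ ≠ 0) (hψ₂ : ψ₂ ≠ 0) :
    ∃ c : K, c ≠ 0 ∧ ψ₁ = c • ψ₂ := by
  have hline : finrank K W.dualAnnihilator = 1 := by
    have := W.finrank_add_finrank_dualAnnihilator_eq
    omega
  obtain ⟨c, hc⟩ := (finrank_eq_one_iff_of_nonzero' (⟨ψ₂, h₂⟩ : W.dualAnnihilator)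
    (by simpa using hψ₂)).mp hline ⟨ψ₁, h₁⟩
  have hc : c • ψ₂ = ψ₁ := congrArg Subtype.val hc
  exact ⟨c, by rintro rfl; exact hψ₁ (by simp [← hc]), hc.symm⟩

end LinearAlgebra

theorem apply_deriv_comp_eq_zero {𝕜 E : Type*} [NontriviallyNormedField 𝕜] [CompleteSpace 𝕜]
    [NormedAddCommGroup E] [NormedSpace 𝕜 E] [FiniteDimensional 𝕜 E]
    (B : E →ₗ[𝕜] E →ₗ[𝕜] 𝕜) {γ : 𝕜 → E} {φ : 𝕜 → 𝕜} {s : 𝕜}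
    (hγ : DifferentiableAt 𝕜 γ s) (hγφ : DifferentiableAt 𝕜 γ (φ s))
    (hφ : DifferentiableAt 𝕜 φ s) (hφ' : deriv φ s ≠ 0)
    (h₀ : ∀ u, B (γ (φ u)) (γ u) = 0) (h₁ : B (γ (φ s)) (deriv γ s) = 0) :
    B (deriv γ (φ s)) (γ s) = 0 := by
  let B' : E →L[𝕜] E →L[𝕜] 𝕜 :=
    (LinearMap.toContinuousLinearMap.toLinearMap.comp B).toContinuousLinearMap
  have hderiv : HasDerivAt (fun u => B' (γ (φ u)) (γ u))
      (B' (γ (φ s)) (deriv γ s) + B' (deriv φ s • deriv γ (φ s)) (γ s)) s :=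
    B'.hasDerivAt_of_bilinear (fun _ => hγφ.hasDerivAt.scomp s hφ.hasDerivAt)
      (fun _ => hγ.hasDerivAt)
  have hconst : (fun u => B' (γ (φ u)) (γ u)) = fun _ => 0 := funext h₀
  rw [hconst] at hderiv
  have hzero := (hasDerivAt_const s (0 : 𝕜)).unique hderiv
  simp only [B', LinearMap.coe_toContinuousLinearMap', LinearMap.coe_comp, Function.comp_apply,
    LinearEquiv.coe_coe, map_smul, h₁, zero_add, smul_apply, smul_eq_mul] at hzero
  exact (mul_eq_zero.mp hzero.symm).resolve_left hφ'

/-- Curve analog of the shift lemma: for a self-dual curve with reparametrization `φ`, the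
projective transformation `G = f⁻¹ ∘ fᵀ` satisfies `G(γ(t)) = γ(φ²(t))`, i.e. `fᵀ(γ(t))`
is proportional to `f(γ(φ(φ(t))))`. -/
theorem stmt_13 (γ : ℝ → Fin 3 → ℝ) (hγ : ContDiff ℝ 1 γ)
    (hind : ∀ t : ℝ, LinearIndependent ℝ ![γ t, deriv γ t])
    (φ : ℝ → ℝ) (hφ : ContDiff ℝ 1 φ) (hφ' : ∀ t, deriv φ t ≠ 0)
    (f : (Fin 3 → ℝ) ≃ₗ[ℝ] Module.Dual ℝ (Fin 3 → ℝ))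
    (hf : ∀ t : ℝ, f (γ (φ t)) (γ t) = 0 ∧ f (γ (φ t)) (deriv γ t) = 0) :
    ∀ t : ℝ, ∃ c : ℝ, c ≠ 0 ∧
      LinearMap.flip (f.toLinearMap) (γ t) = c • (f (γ (φ (φ t)))) := by
  intro t
  have hγd : Differentiable ℝ γ := hγ.differentiable one_ne_zero
  have hφd : Differentiable ℝ φ := hφ.differentiable one_ne_zero
  have hplane : finrank ℝ (Submodule.span ℝ (Set.range ![γ (φ t), deriv γ (φ t)])) + 1 =
      finrank ℝ (Fin 3 → ℝ) := by
    simp [finrank_span_eq_card (hind (φ t))]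
  refine exists_ne_zero_smul_eq_of_mem_dualAnnihilator hplane ?_ ?_
    (f.flip_apply_ne_zero ((hind t).ne_zero 0)) (f.map_ne_zero_iff.mpr ((hind _).ne_zero 0))
  · rw [Submodule.mem_dualAnnihilator_span_range_iff, Fin.forall_fin_two]
    exact ⟨(hf t).1, apply_deriv_comp_eq_zero f.toLinearMap (hγd t) (hγd (φ t)) (hφd t) (hφ' t)
      (fun u => (hf u).1) (hf t).2⟩
  · rw [Submodule.mem_dualAnnihilator_span_range_iff, Fin.forall_fin_two]
    exact hf (φ t)
end

section
/- Let γ : ℝ → ℝ³ be a C¹, 2π-periodic curve with γ(t) and γ'(t) linearly independent for every t, which is projectively simple (if s, t ∈ [0, 2π) and γ(s) is a real scalar multiple of γ(t), then s = t) and contains four points in general position (there exist t₁, t₂, t₃, t₄ such that any three of γ(t₁), γ(t₂), γ(t₃), γ(t₄) are linearly independent). Let φ : ℝ → ℝ be C¹ with φ' > 0 and φ(t + 2π) = φ(t) + 2π, and let f : ℝ³ ≃ (ℝ³)* be a linear equivalence such that f(γ(φ(t))) vanishes on γ(t) and γ'(t) for all t. Then the bilinear form F(x,y) := f(x)(y)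 is symmetric if and only if φ(φ(t)) ≡ t (mod 2π) for all t. -/
/-!
If `F` is symmetric, then `F(γ t, ·)` and `F(γ (φ (φ t)), ·)` both annihilate the tangent line
`span {γ (φ t), γ' (φ t)}`, so `γ (φ (φ t))` is proportional to `γ t`, and projective simplicity
forces `φ (φ t) ≡ t`.

Conversely, if `φ` is an involution, then at every point `p = γ t` the functionals `F(p, ·)` and
`F(·, p)` annihilate the same tangent line `span {γ s, γ' s}` (`s = φ t`), hence are proportional.
Writing the skew part as `F(x, y) - F(y, x) = v ⬝ (x × y)`, proportionality at `p` gives either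
`v × p = 0` or `F(p, v) = 0`. Among four points in general position at most one lies on the line
`K v`, so `F(·, v)` vanishes on three independent points, and nondegeneracy gives `v = 0`.
-/

open Module Matrix

section LinearAlgebra

variable {K V : Type*} [Field K] [AddCommGroup V] [Module K V]

theorem Module.Dual.exists_eq_smul_of_linearIndependent [FiniteDimensional K V] {n : ℕ}
    {u : Fin n → V} (hu : LinearIndependent K u) (hV : finrank K V = n + 1) {g h : Dual K V}
    (hg : g ≠ 0) (hgu : ∀ i, g (u i) = 0) (hhu : ∀ i, h (u i) = 0) : ∃ c : K, h = c • g := by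
  set W := Submodule.span K (Set.range u)
  have hW : finrank K W.dualAnnihilator = 1 := by
    have := Subspace.finrank_add_finrank_dualAnnihilator_eq W
    rw [finrank_span_eq_card hu, Fintype.card_fin, hV] at this
    omega
  have mem (l : Dual K V) (hl : ∀ i, l (u i) = 0) : l ∈ W.dualAnnihilator :=
    (Submodule.mem_dualAnnihilator l).mpr fun w hw =>
      (Submodule.span_le (p := LinearMap.ker l)).mpr (by rintro _ ⟨i, rfl⟩; exact hl i) hw
  obtain ⟨c, hc⟩ := (finrank_eq_one_iff_of_nonzero' (⟨g, mem g hgu⟩ : W.dualAnnihilator)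
    (by simpa using hg)).mp hW ⟨h, mem h hhu⟩
  exact ⟨c, by simpa using congrArg Subtype.val hc.symm⟩

theorem Module.Dual.eq_zero_of_linearIndependent {ι : Type*} [Fintype ι] [Nonempty ι]
    {u : ι → V} (hu : LinearIndependent K u) (hcard : Fintype.card ι = finrank K V)
    {g : Dual K V} (hg : ∀ i, g (u i) = 0) : g = 0 :=
  (basisOfLinearIndependentOfCardEqFinrank hu hcard).ext fun i => by simpa using hg i

end LinearAlgebra

theorem exists_sub_flip_eq_dotProduct_cross {K : Type*} [CommRing K]
    (B : (Fin 3 → K) →ₗ[K] (Fin 3 → K) →ₗ[K] K) :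
    ∃ v : Fin 3 → K, ∀ x y, B x y - B y x = v ⬝ᵥ (x ⨯₃ y) := by
  let e : Fin 3 → Fin 3 → K := fun i => Pi.single i 1
  let v := ![B (e 1) (e 2) - B (e 2) (e 1), B (e 2) (e 0) - B (e 0) (e 2),
    B (e 0) (e 1) - B (e 1) (e 0)]
  have key : B - B.flip = (crossProduct).compr₂ (dotProductBilin K K v) := by
    refine LinearMap.ext_basis (Pi.basisFun K (Fin 3)) (Pi.basisFun K (Fin 3)) fun i j => ?_
    fin_cases i <;> fin_cases j <;> simp [v, e, cross_apply, vecHead, vecTail]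
  exact ⟨v, fun x y => by simpa using LinearMap.congr_fun₂ key x y⟩

section GeneralPosition

variable {K : Type*} [Field K]

def InGeneralPosition (p : Fin 4 → Fin 3 → K) : Prop :=
  ∀ i j l : Fin 4, i ≠ j → i ≠ l → j ≠ l → LinearIndependent K ![p i, p j, p l]

theorem InGeneralPosition.notMem_span_singleton_of_mem {p : Fin 4 → Fin 3 → K}
    (hp : InGeneralPosition p) {v : Fin 3 → K} {i j : Fin 4} (hij : i ≠ j)
    (hi : p i ∈ K ∙ v) : p j ∉ K ∙ v := by
  intro hj
  obtain ⟨l, hil, hjl⟩ : ∃ l : Fin 4, i ≠ l ∧ j ≠ l := by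
    fin_cases i <;> fin_cases j <;> simp_all <;> decide
  obtain ⟨a, ha⟩ := Submodule.mem_span_singleton.mp hi
  obtain ⟨b, hb⟩ := Submodule.mem_span_singleton.mp hj
  have hli := hp i j l hij hil hjl
  have hcoeffs := Fintype.linearIndependent_iff.mp hli ![b, -a, 0] (by
    simp [Fin.sum_univ_three, ← ha, ← hb, smul_smul, mul_comm])
  have ha0 : a = 0 := by simpa using hcoeffs 1
  exact hli.ne_zero 0 (by simp [← ha, ha0])

theorem InGeneralPosition.dual_eq_zero {p : Fin 4 → Fin 3 → K} (hp : InGeneralPosition p)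
    {g : Dual K (Fin 3 → K)} {v : Fin 3 → K} (h : ∀ i, g (p i) = 0 ∨ p i ∈ K ∙ v) : g = 0 := by
  obtain ⟨i₀, hi₀⟩ : ∃ i₀, ∀ j, j ≠ i₀ → g (p j) = 0 := by
    by_cases hex : ∃ i, g (p i) ≠ 0
    · obtain ⟨i, hi⟩ := hex
      exact ⟨i, fun j hji => (h j).resolve_right
        (hp.notMem_span_singleton_of_mem hji.symm ((h i).resolve_left hi))⟩
    · push Not at hex
      exact ⟨0, fun j _ => hex j⟩
  have hli : LinearIndependent K (p ∘ i₀.succAbove) := by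
    convert hp _ _ _ (i₀.succAboveEmb.injective.ne (by decide : (0 : Fin 3) ≠ 1))
      (i₀.succAboveEmb.injective.ne (by decide : (0 : Fin 3) ≠ 2))
      (i₀.succAboveEmb.injective.ne (by decide : (1 : Fin 3) ≠ 2)) using 1
    funext k; fin_cases k <;> rfl
  exact Module.Dual.eq_zero_of_linearIndependent hli (by simp)
    fun k => hi₀ _ (Fin.succAbove_ne i₀ k)

theorem InGeneralPosition.apply_comm_of_flip_eq_smul {p : Fin 4 → Fin 3 → K}
    (hp : InGeneralPosition p) (B : (Fin 3 → K) →ₗ[K] (Fin 3 → K) →ₗ[K] K)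
    (hB : ∀ x, B.flip x = 0 → x = 0) (h : ∀ i, ∃ c : K, B.flip (p i) = c • B (p i)) :
    ∀ x y, B x y = B y x := by
  obtain ⟨v, hv⟩ := exists_sub_flip_eq_dotProduct_cross B
  suffices v = 0 by simpa [this, sub_eq_zero] using hv
  by_contra hv0
  refine hv0 (hB v (hp.dual_eq_zero (v := v) fun i => ?_))
  obtain ⟨c, hc⟩ := h i
  have hskew (w) : B (p i) w - B w (p i) = (1 - c) * B (p i) w := by
    have hw : B w (p i) = c * B (p i) w := by simpa using LinearMap.congr_fun hc w
    rw [hw]; ring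
  by_cases hc1 : c = 1
  · right
    have hcross : v ⨯₃ p i = 0 := dotProduct_eq_zero _ fun w => by
      rw [dotProduct_comm, triple_product_permutation, ← hv, hskew, hc1, sub_self, zero_mul]
    rw [← not_ne_iff, crossProduct_ne_zero_iff_linearIndependent,
      LinearIndependent.pair_iff' hv0] at hcross
    push Not at hcross
    exact Submodule.mem_span_singleton.mpr hcross
  · left
    have h0 := hskew v
    rw [hv, dot_cross_self] at h0
    exact (mul_eq_zero.mp h0.symm).resolve_left (sub_ne_zero.mpr (Ne.symm hc1))

end GeneralPosition

theorem LinearMap.apply_add_apply_eq_zero_of_hasDerivAt {E F : Type*} [NormedAddCommGroup E]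
    [NormedSpace ℝ E] [FiniteDimensional ℝ E] [NormedAddCommGroup F] [NormedSpace ℝ F]
    [FiniteDimensional ℝ F] (B : E →ₗ[ℝ] F →ₗ[ℝ] ℝ) {a : ℝ → E} {b : ℝ → F} {a' : E} {b' : F}
    {t : ℝ} (ha : HasDerivAt a a' t) (hb : HasDerivAt b b' t) (h : ∀ s, B (a s) (b s) = 0) :
    B a' (b t) + B (a t) b' = 0 := by
  let B' : E →L[ℝ] F →L[ℝ] ℝ :=
    LinearMap.toContinuousLinearMap (LinearMap.toContinuousLinearMap.toLinearMap ∘ₗ B)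
  have hB' := B'.hasDerivAt_of_bilinear (fun _ => ha) (fun _ => hb)
  rw [show (fun s => B' (a s) (b s)) = fun _ => 0 from funext h] at hB'
  simpa [B', add_comm] using hB'.unique (hasDerivAt_const t (0 : ℝ))

theorem Function.Periodic.exists_int_of_smul_eq {V : Type*} [AddCommGroup V] [Module ℝ V]
    {γ : ℝ → V} {p : ℝ} (hp : 0 < p) (hper : Function.Periodic γ p)
    (hsimple : ∀ s t : ℝ, s ∈ Set.Ico 0 p → t ∈ Set.Ico 0 p → (∃ c : ℝ, γ s = c • γ t) → s = t)
    {s t : ℝ} (h : ∃ c : ℝ, γ s = c • γ t) : ∃ z : ℤ, s = t + p * z := by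
  have hmod (r : ℝ) : γ (toIcoMod hp 0 r) = γ r := by
    conv_rhs => rw [← toIcoMod_add_toIcoDiv_zsmul hp 0 r]
    exact (hper.zsmul _ _).symm
  have := hsimple _ _ (toIcoMod_mem_Ico' hp s) (toIcoMod_mem_Ico' hp t) (by rwa [hmod, hmod])
  obtain ⟨z, hz⟩ := (toIcoMod_eq_toIcoMod hp).mp this.symm
  exact ⟨z, by rw [zsmul_eq_mul] at hz; linarith⟩

section SelfDualCurve

variable {γ : ℝ → Fin 3 → ℝ} {φ : ℝ → ℝ} {f : (Fin 3 → ℝ) ≃ₗ[ℝ] Dual ℝ (Fin 3 → ℝ)}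

theorem apply_deriv_comp_apply_eq_zero (hγ : Differentiable ℝ γ) (hφ : Differentiable ℝ φ)
    (hφ' : ∀ t, deriv φ t ≠ 0)
    (hf : ∀ t, f (γ (φ t)) (γ t) = 0 ∧ f (γ (φ t)) (deriv γ t) = 0) (t : ℝ) :
    f (deriv γ (φ t)) (γ t) = 0 := by
  have h := f.toLinearMap.apply_add_apply_eq_zero_of_hasDerivAt
    ((hγ (φ t)).hasDerivAt.scomp t (hφ t).hasDerivAt) (hγ t).hasDerivAt fun s => (hf s).1
  simpa [(hf t).2, hφ' t] using h

theorem exists_comp_comp_eq_smul_of_apply_comm (hγ : Differentiable ℝ γ)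
    (hφ : Differentiable ℝ φ) (hφ' : ∀ t, deriv φ t ≠ 0)
    (hind : ∀ t, LinearIndependent ℝ ![γ t, deriv γ t])
    (hf : ∀ t, f (γ (φ t)) (γ t) = 0 ∧ f (γ (φ t)) (deriv γ t) = 0)
    (hsymm : ∀ x y, f x y = f y x) (t : ℝ) : ∃ c : ℝ, γ (φ (φ t)) = c • γ t := by
  obtain ⟨c, hc⟩ := Module.Dual.exists_eq_smul_of_linearIndependent (hind (φ t)) (by simp)
    (f.map_ne_zero_iff.mpr ((hind t).ne_zero 0)) (h := f (γ (φ (φ t))))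
    (fun i => by
      fin_cases i <;> simp [hsymm (γ t), (hf t).1, apply_deriv_comp_apply_eq_zero hγ hφ hφ' hf t])
    (fun i => by fin_cases i <;> simp [(hf (φ t)).1, (hf (φ t)).2])
  exact ⟨c, f.injective (by simpa using hc)⟩

theorem exists_flip_eq_smul_of_comp_comp_eq (hγ : Differentiable ℝ γ) (hφ : Differentiable ℝ φ)
    (hind : ∀ t, LinearIndependent ℝ ![γ t, deriv γ t])
    (hf : ∀ t, f (γ (φ t)) (γ t) = 0 ∧ f (γ (φ t)) (deriv γ t) = 0)
    (hinv : ∀ t, γ (φ (φ t)) = γ t) (t : ℝ) :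
    ∃ c : ℝ, f.toLinearMap.flip (γ t) = c • f (γ t) := by
  set s := φ t
  have hγs : γ (φ s) = γ t := hinv t
  have hf' (r : ℝ) : f (γ r) (γ (φ r)) = 0 ∧ f (γ r) (deriv γ (φ r)) = 0 := by
    simpa [hinv] using hf (φ r)
  have hderiv : f (deriv γ s) (γ (φ s)) = 0 := by
    have h := f.toLinearMap.apply_add_apply_eq_zero_of_hasDerivAt (hγ s).hasDerivAt
      ((hγ (φ s)).hasDerivAt.scomp s (hφ s).hasDerivAt) fun r => (hf' r).1
    simpa [(hf' s).2] using h
  exact Module.Dual.exists_eq_smul_of_linearIndependent (hind s) (by simp)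
    (f.map_ne_zero_iff.mpr ((hind t).ne_zero 0))
    (fun i => by fin_cases i <;> simp [← hγs, (hf s).1, (hf s).2])
    (fun i => by fin_cases i <;> simp [← hγs, (hf' s).1, hderiv])

end SelfDualCurve

theorem stmt_14_general (γ : ℝ → Fin 3 → ℝ) (hγ : ContDiff ℝ 1 γ)
    (hper : ∀ t : ℝ, γ (t + 2 * Real.pi) = γ t)
    (hind : ∀ t : ℝ, LinearIndependent ℝ ![γ t, deriv γ t])
    (hsimple : ∀ s t : ℝ, s ∈ Set.Ico 0 (2 * Real.pi) → t ∈ Set.Ico 0 (2 * Real.pi) →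
      (∃ c : ℝ, γ s = c • γ t) → s = t)
    (hgen : ∃ t : Fin 4 → ℝ, ∀ i j l : Fin 4, i ≠ j → i ≠ l → j ≠ l →
      LinearIndependent ℝ ![γ (t i), γ (t j), γ (t l)])
    (φ : ℝ → ℝ) (hφ : ContDiff ℝ 1 φ) (hφ' : ∀ t, 0 < deriv φ t)
    (f : (Fin 3 → ℝ) ≃ₗ[ℝ] Module.Dual ℝ (Fin 3 → ℝ))
    (hf : ∀ t : ℝ, f (γ (φ t)) (γ t) = 0 ∧ f (γ (φ t)) (deriv γ t) = 0) :
    (∀ x y : Fin 3 → ℝ, f x y = f y x) ↔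
      (∀ t : ℝ, ∃ z : ℤ, φ (φ t) = t + 2 * Real.pi * z) := by
  have hγd := hγ.differentiable one_ne_zero
  have hφd := hφ.differentiable one_ne_zero
  constructor
  · intro hsymm t
    exact Function.Periodic.exists_int_of_smul_eq (by positivity) hper hsimple
      (exists_comp_comp_eq_smul_of_apply_comm hγd hφd (fun t => (hφ' t).ne') hind hf hsymm t)
  · intro hinv
    have hγφφ (t : ℝ) : γ (φ (φ t)) = γ t := by
      obtain ⟨z, hz⟩ := hinv t
      rw [hz, mul_comm, ← zsmul_eq_mul]
      exact Function.Periodic.zsmul hper z t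
    obtain ⟨p, hp⟩ := hgen
    have hnondeg (x : Fin 3 → ℝ) (hx : f.toLinearMap.flip x = 0) : x = 0 :=
      (Module.forall_dual_apply_eq_zero_iff ℝ x).mp fun l => by
        simpa using LinearMap.congr_fun hx (f.symm l)
    exact InGeneralPosition.apply_comm_of_flip_eq_smul (p := γ ∘ p) hp f.toLinearMap hnondeg
      fun i => exists_flip_eq_smul_of_comp_comp_eq hγd hφd hind hf hγφφ (p i)

/-- For a simple closed self-dual curve, the associated bilinear form `F(x,y) = f(x)(y)`
is symmetric iff the reparametrization `φ` is an involution modulo `2π`. -/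
theorem stmt_14 (γ : ℝ → Fin 3 → ℝ) (hγ : ContDiff ℝ 1 γ)
    (hper : ∀ t : ℝ, γ (t + 2 * Real.pi) = γ t)
    (hind : ∀ t : ℝ, LinearIndependent ℝ ![γ t, deriv γ t])
    (hsimple : ∀ s t : ℝ, s ∈ Set.Ico 0 (2 * Real.pi) → t ∈ Set.Ico 0 (2 * Real.pi) →
      (∃ c : ℝ, γ s = c • γ t) → s = t)
    (hgen : ∃ t : Fin 4 → ℝ, ∀ i j l : Fin 4, i ≠ j → i ≠ l → j ≠ l →
      LinearIndependent ℝ ![γ (t i), γ (t j), γ (t l)])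
    (φ : ℝ → ℝ) (hφ : ContDiff ℝ 1 φ) (hφ' : ∀ t, 0 < deriv φ t)
    (hφper : ∀ t : ℝ, φ (t + 2 * Real.pi) = φ t + 2 * Real.pi)
    (f : (Fin 3 → ℝ) ≃ₗ[ℝ] Module.Dual ℝ (Fin 3 → ℝ))
    (hf : ∀ t : ℝ, f (γ (φ t)) (γ t) = 0 ∧ f (γ (φ t)) (deriv γ t) = 0) :
    (∀ x y : Fin 3 → ℝ, f x y = f y x) ↔
      (∀ t : ℝ, ∃ z : ℤ, φ (φ t) = t + 2 * Real.pi * z) :=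
  stmt_14_general γ hγ hper hind hsimple hgen φ hφ hφ' f hf
end

section
/- Explicit self-dual curves: let p, q be coprime positive integers and θ := πp/q. Let β : ℝ → ℝ be C¹ with |β(t)| < π/4 for all t and β(t + θ) = −β(t), and let ρ : ℝ → ℝ be C¹ with ρ'(t) = (β'(t) + 1)·tan(2β(t)) for all t. Define Γ : ℝ → ℝ³ by Γ(t) = (e^{ρ(t)} cos(t + β(t) − θ), e^{ρ(t)} sin(t + β(t) − θ), 1) (a curve given in polar coordinates by angle t + β(t) − πp/q and radius e^{ρ(t)}). Then Γ is projectively self-dual with shift θ: there exists a linear equivalence f : ℝ³ ≃ (ℝ³)* such that for every t the functional f(Γ(t)) vanishes on Γ(t + θ) and on Γ'(t + θ). (One may take f(x)(y) = y₁(x₁cos θ − x₂sin θ) + y₂(x₁sin θ + x₂cos θ) − λ x₃y₃ with λ = e^{ρ(0)+ρ(θ)}cos(2β(0)) > 0.) -/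
/-!
The polarity `f(x)(y) = ⟨R_θ (x₁, x₂), (y₁, y₂)⟩ − λ x₃ y₃` pairs the lifts of the points with polar
coordinates `(a, r)` and `(b, s)` to `r s cos (a + θ − b) − λ`. For `Γ(t)` and `Γ(t + θ)` the angle
`a + θ − b` is `2β(t)` by antiperiodicity of `β`, and the equation for `ρ'` makes
`e^{ρ(t) + ρ(t + θ)} cos 2β(t)` constant, so the pairing vanishes once `λ` is that constant.
The pairing of `Γ(t)` with `Γ'(t + θ)` is `e^{ρ(t) + ρ(t + θ)}` times
`ρ'(t + θ) cos 2β(t) + (1 + β'(t + θ)) sin 2β(t)`, which is the equation for `ρ'` at `t + θ`.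
-/

open Real Function

section RotatedPolarity

variable (θ L : ℝ)

noncomputable def rotatedPolarityMatrix : Matrix (Fin 3) (Fin 3) ℝ :=
  !![cos θ, sin θ, 0; -sin θ, cos θ, 0; 0, 0, -L]

theorem det_rotatedPolarityMatrix : (rotatedPolarityMatrix θ L).det = -L := by
  simp only [rotatedPolarityMatrix, Matrix.det_fin_three, Matrix.of_apply, Matrix.cons_val',
    Matrix.cons_val_zero, Matrix.cons_val_fin_one, Matrix.cons_val_one, Matrix.cons_val]
  linear_combination (-L) * sin_sq_add_cos_sq θ

variable {L}

noncomputable def rotatedPolarity (hL : L ≠ 0) :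
    (Fin 3 → ℝ) ≃ₗ[ℝ] Module.Dual ℝ (Fin 3 → ℝ) :=
  (rotatedPolarityMatrix θ L).toBilin'.toDual <|
    LinearMap.BilinForm.nondegenerate_toBilin'_of_det_ne_zero' _ <| by
      rwa [det_rotatedPolarityMatrix, neg_ne_zero]

theorem rotatedPolarity_apply (hL : L ≠ 0) (x y : Fin 3 → ℝ) :
    rotatedPolarity θ hL x y =
      y 0 * (x 0 * cos θ - x 1 * sin θ) + y 1 * (x 0 * sin θ + x 1 * cos θ) - L * x 2 * y 2 := by
  rw [rotatedPolarity, LinearMap.BilinForm.toDual_def, Matrix.toBilin'_apply]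
  simp only [rotatedPolarityMatrix, Matrix.of_apply, Matrix.cons_val', Matrix.cons_val_fin_one,
    Fin.sum_univ_three, Matrix.cons_val_zero, Matrix.cons_val_one, Matrix.cons_val]
  ring

theorem rotatedPolarity_polar_polar (hL : L ≠ 0) (r a s b : ℝ) :
    rotatedPolarity θ hL ![r * cos a, r * sin a, 1] ![s * cos b, s * sin b, 1] =
      r * s * cos (a + θ - b) - L := by
  rw [rotatedPolarity_apply, cos_sub, cos_add, sin_add]
  simp only [Matrix.cons_val_zero, Matrix.cons_val_one, Matrix.cons_val]
  ring

theorem rotatedPolarity_polar_tangent (hL : L ≠ 0) (r a u v b : ℝ) :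
    rotatedPolarity θ hL ![r * cos a, r * sin a, 1]
        ![u * cos b - v * sin b, u * sin b + v * cos b, 0] =
      r * (u * cos (a + θ - b) + v * sin (a + θ - b)) := by
  rw [rotatedPolarity_apply, cos_sub, sin_sub, cos_add, sin_add]
  simp only [Matrix.cons_val_zero, Matrix.cons_val_one, Matrix.cons_val]
  ring

end RotatedPolarity

theorem hasDerivAt_polarCurve {ρ φ : ℝ → ℝ} {ρ' φ' s : ℝ} (hρ : HasDerivAt ρ ρ' s)
    (hφ : HasDerivAt φ φ' s) :
    HasDerivAt (fun t ↦ ![exp (ρ t) * cos (φ t), exp (ρ t) * sin (φ t), 1])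
      ![exp (ρ s) * ρ' * cos (φ s) - exp (ρ s) * φ' * sin (φ s),
        exp (ρ s) * ρ' * sin (φ s) + exp (ρ s) * φ' * cos (φ s), 0] s := by
  refine hasDerivAt_pi.mpr fun i ↦ ?_
  fin_cases i
  · simp only [Fin.zero_eta, Matrix.cons_val_zero]
    exact (hρ.exp.mul hφ.cos).congr_deriv (by ring)
  · simp only [Fin.mk_one, Matrix.cons_val_one, Matrix.cons_val_zero]
    exact (hρ.exp.mul hφ.sin).congr_deriv (by ring)
  · exact hasDerivAt_const s (1 : ℝ)

theorem Function.Antiperiodic.deriv {β : ℝ → ℝ} {θ : ℝ} (h : Antiperiodic β θ) :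
    Antiperiodic (_root_.deriv β) θ := fun t ↦ by
  rw [← deriv_comp_add_const, show (fun s ↦ β (s + θ)) = fun s ↦ -β s from funext h,
    deriv.fun_neg]

section SelfDualityEquation

variable {β ρ : ℝ → ℝ} {θ : ℝ}

theorem deriv_mul_cos_eq_of_eq_mul_tan (hcos : ∀ t, cos (2 * β t) ≠ 0)
    (hρ' : ∀ t, deriv ρ t = (deriv β t + 1) * tan (2 * β t)) (t : ℝ) :
    deriv ρ t * cos (2 * β t) = (deriv β t + 1) * sin (2 * β t) := by
  rw [hρ', mul_assoc, tan_mul_cos (hcos t)]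

theorem deriv_add_mul_cos_eq_of_eq_mul_tan (hcos : ∀ t, cos (2 * β t) ≠ 0)
    (hρ' : ∀ t, deriv ρ t = (deriv β t + 1) * tan (2 * β t)) (hβ : Antiperiodic β θ) (t : ℝ) :
    deriv ρ (t + θ) * cos (2 * β t) = -((deriv β (t + θ) + 1) * sin (2 * β t)) := by
  have h := deriv_mul_cos_eq_of_eq_mul_tan hcos hρ' (t + θ)
  rwa [hβ t, mul_neg, cos_neg, sin_neg, mul_neg] at h

theorem hasDerivAt_exp_add_mul_cos (hcos : ∀ t, cos (2 * β t) ≠ 0)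
    (hρ' : ∀ t, deriv ρ t = (deriv β t + 1) * tan (2 * β t)) (hβd : Differentiable ℝ β)
    (hρd : Differentiable ℝ ρ) (hβ : Antiperiodic β θ) (t : ℝ) :
    HasDerivAt (fun t ↦ exp (ρ t + ρ (t + θ)) * cos (2 * β t)) 0 t := by
  have hshift : HasDerivAt (fun s ↦ ρ (s + θ)) (deriv ρ (t + θ)) t :=
    (hρd _).hasDerivAt.comp_add_const t θ
  refine (((hρd t).hasDerivAt.add hshift).exp.mul
    ((hβd t).hasDerivAt.const_mul 2).cos).congr_deriv ?_
  have h₁ := deriv_mul_cos_eq_of_eq_mul_tan hcos hρ' t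
  have h₂ := deriv_add_mul_cos_eq_of_eq_mul_tan hcos hρ' hβ t
  rw [hβ.deriv t] at h₂
  simp only [Pi.add_apply]
  linear_combination exp (ρ t + ρ (t + θ)) * (h₁ + h₂)

theorem exp_add_mul_cos_eq (hcos : ∀ t, cos (2 * β t) ≠ 0)
    (hρ' : ∀ t, deriv ρ t = (deriv β t + 1) * tan (2 * β t)) (hβd : Differentiable ℝ β)
    (hρd : Differentiable ℝ ρ) (hβ : Antiperiodic β θ) (t : ℝ) :
    exp (ρ t + ρ (t + θ)) * cos (2 * β t) = exp (ρ 0 + ρ θ) * cos (2 * β 0) := by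
  have hderiv := hasDerivAt_exp_add_mul_cos hcos hρ' hβd hρd hβ
  simpa using is_const_of_deriv_eq_zero (fun s ↦ (hderiv s).differentiableAt)
    (fun s ↦ (hderiv s).deriv) t 0

end SelfDualityEquation

theorem stmt_16_general (θ : ℝ)
    (β : ℝ → ℝ) (hβ : ContDiff ℝ 1 β)
    (hβbd : ∀ t : ℝ, |β t| < Real.pi / 4)
    (hβanti : ∀ t : ℝ, β (t + θ) = -β t)
    (ρ : ℝ → ℝ) (hρ : ContDiff ℝ 1 ρ)
    (hρ' : ∀ t : ℝ, deriv ρ t = (deriv β t + 1) * Real.tan (2 * β t))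
    (Γ : ℝ → Fin 3 → ℝ)
    (hΓ : ∀ t : ℝ, Γ t = ![Real.exp (ρ t) * Real.cos (t + β t - θ),
                           Real.exp (ρ t) * Real.sin (t + β t - θ), 1]) :
    ∃ f : (Fin 3 → ℝ) ≃ₗ[ℝ] Module.Dual ℝ (Fin 3 → ℝ),
      ∀ t : ℝ, f (Γ t) (Γ (t + θ)) = 0 ∧ f (Γ t) (deriv Γ (t + θ)) = 0 := by
  obtain rfl := funext hΓ
  have hcos (t : ℝ) : 0 < cos (2 * β t) := by
    obtain ⟨h₁, h₂⟩ := abs_lt.mp (hβbd t)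
    exact cos_pos_of_mem_Ioo ⟨by linarith, by linarith⟩
  have hcos_ne (t : ℝ) : cos (2 * β t) ≠ 0 := (hcos t).ne'
  have hβd := hβ.differentiable one_ne_zero
  have hρd := hρ.differentiable one_ne_zero
  have hL : exp (ρ 0 + ρ θ) * cos (2 * β 0) ≠ 0 := (mul_pos (exp_pos _) (hcos 0)).ne'
  have hangle (t : ℝ) : t + β t - θ + θ - (t + θ + β (t + θ) - θ) = 2 * β t := by
    rw [hβanti t]
    ring
  refine ⟨rotatedPolarity θ hL, fun t ↦ ⟨?_, ?_⟩⟩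
  · dsimp only
    rw [rotatedPolarity_polar_polar, hangle, ← exp_add,
      exp_add_mul_cos_eq hcos_ne hρ' hβd hρd hβanti, sub_self]
  · have hφ : HasDerivAt (fun s ↦ s + β s - θ) (1 + deriv β (t + θ)) (t + θ) :=
      ((hasDerivAt_id _).add (hβd _).hasDerivAt).sub_const θ
    rw [(hasDerivAt_polarCurve (hρd _).hasDerivAt hφ).deriv]
    dsimp only
    rw [rotatedPolarity_polar_tangent, hangle]
    linear_combination exp (ρ t) * exp (ρ (t + θ)) *
      deriv_add_mul_cos_eq_of_eq_mul_tan hcos_ne hρ' hβanti t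

/-- Explicit self-dual curves: the curve with polar coordinates
`(t + β(t) − πp/q, e^{ρ(t)})`, where `β(t+θ) = −β(t)` and `ρ' = (β'+1)tan(2β)`,
is projectively self-dual with shift `θ = πp/q`. -/
theorem stmt_16 (p q : ℕ) (hp : 0 < p) (hq : 0 < q) (hpq : Nat.Coprime p q)
    (θ : ℝ) (hθ : θ = Real.pi * p / q)
    (β : ℝ → ℝ) (hβ : ContDiff ℝ 1 β)
    (hβbd : ∀ t : ℝ, |β t| < Real.pi / 4)
    (hβanti : ∀ t : ℝ, β (t + θ) = -β t)
    (ρ : ℝ → ℝ) (hρ : ContDiff ℝ 1 ρ)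
    (hρ' : ∀ t : ℝ, deriv ρ t = (deriv β t + 1) * Real.tan (2 * β t))
    (Γ : ℝ → Fin 3 → ℝ)
    (hΓ : ∀ t : ℝ, Γ t = ![Real.exp (ρ t) * Real.cos (t + β t - θ),
                           Real.exp (ρ t) * Real.sin (t + β t - θ), 1]) :
    ∃ f : (Fin 3 → ℝ) ≃ₗ[ℝ] Module.Dual ℝ (Fin 3 → ℝ),
      ∀ t : ℝ, f (Γ t) (Γ (t + θ)) = 0 ∧ f (Γ t) (deriv Γ (t + θ)) = 0 :=
  stmt_16_general θ β hβ hβbd hβanti ρ hρ hρ' Γ hΓ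
end

section
/- Radon curves, suitably parametrized, are projectively self-dual: let ω(u,v) := u₁v₂ − u₂v₁ be the standard area form on ℝ², let u : ℝ → ℝ² be C¹, and let c > 0. Assume that for all t, ω(u(t), u'(t + c)) = 0 and ω(u'(t), u(t + c)) = 0, and that ω(u(t₀), u(t₀ + c)) = 1 for some t₀. Then ω(u(t), u(t + c)) = 1 for all t, and the lifted curve Γ(t) := (u(t), 1) ∈ ℝ³ is projectively self-dual: the linear equivalence f : ℝ³ → (ℝ³)* given by f(x)(y) = (x₁y₂ − x₂y₁) − x₃y₃ satisfies f(Γ(t))(Γ(t + c)) = 0 and f(Γ(t))(Γ'(t + c)) = 0 for every t. -/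
/-!
The derivative of `t ↦ ω(u t, u (t + c))` is `ω(u' t, u (t + c)) + ω(u t, u' (t + c))`, which the
Radon conditions make vanish, so this area is constantly `1`. The Gram matrix of `f` has
determinant `-1`, so `f` identifies `ℝ³` with its dual, and on the lifted curve it
reads `f(Γ t)(Γ s) = ω(u t, u s) - 1` and `f(Γ t)(Γ' s) = ω(u t, u' s)`.
-/

def areaForm (x y : Fin 2 → ℝ) : ℝ := x 0 * y 1 - x 1 * y 0

theorem HasDerivAt.areaForm {f g : ℝ → Fin 2 → ℝ} {f' g' : Fin 2 → ℝ} {t : ℝ}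
    (hf : HasDerivAt f f' t) (hg : HasDerivAt g g' t) :
    HasDerivAt (fun s => areaForm (f s) (g s)) (areaForm f' (g t) + areaForm (f t) g') t := by
  have hfi := fun i => hasDerivAt_pi.1 hf i
  have hgi := fun i => hasDerivAt_pi.1 hg i
  exact (((hfi 0).mul (hgi 1)).sub ((hfi 1).mul (hgi 0))).congr_deriv
    (by simp only [_root_.areaForm]; ring)

theorem areaForm_shift_eq_of_radon {u : ℝ → Fin 2 → ℝ} (hu : Differentiable ℝ u) {c : ℝ}
    (h1 : ∀ t, areaForm (u t) (deriv u (t + c)) = 0)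
    (h2 : ∀ t, areaForm (deriv u t) (u (t + c)) = 0) (s t : ℝ) :
    areaForm (u s) (u (s + c)) = areaForm (u t) (u (t + c)) := by
  have hderiv : ∀ t, HasDerivAt (fun s => areaForm (u s) (u (s + c))) 0 t := fun t => by
    have hshift : HasDerivAt (fun s => u (s + c)) (deriv u (t + c)) t :=
      (hu (t + c)).hasDerivAt.comp_add_const t c
    simpa [h1 t, h2 t] using (hu t).hasDerivAt.areaForm hshift
  exact is_const_of_deriv_eq_zero (fun t => (hderiv t).differentiableAt)
    (fun t => (hderiv t).deriv) s t

theorem HasDerivAt.homogenize {u : ℝ → Fin 2 → ℝ} {u' : Fin 2 → ℝ} {t : ℝ}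
    (hu : HasDerivAt u u' t) :
    HasDerivAt (fun s => ![u s 0, u s 1, 1]) ![u' 0, u' 1, 0] t := by
  refine hasDerivAt_pi.2 fun i => ?_
  fin_cases i
  · exact hasDerivAt_pi.1 hu 0
  · exact hasDerivAt_pi.1 hu 1
  · exact hasDerivAt_const t (1 : ℝ)

def liftedAreaForm : LinearMap.BilinForm ℝ (Fin 3 → ℝ) :=
  Matrix.toBilin' !![0, 1, 0; -1, 0, 0; 0, 0, -1]

theorem liftedAreaForm_apply (x y : Fin 3 → ℝ) :
    liftedAreaForm x y = (x 0 * y 1 - x 1 * y 0) - x 2 * y 2 := by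
  simp [liftedAreaForm, Matrix.toBilin'_apply', dotProduct, Matrix.mulVec, Fin.sum_univ_three]
  ring

theorem liftedAreaForm_nondegenerate : liftedAreaForm.Nondegenerate :=
  LinearMap.BilinForm.nondegenerate_toBilin'_of_det_ne_zero' _ (by simp [Matrix.det_fin_three])

theorem stmt_17_general (u : ℝ → Fin 2 → ℝ) (hu : ContDiff ℝ 1 u) (c : ℝ)
    (h1 : ∀ t : ℝ, u t 0 * deriv u (t + c) 1 - u t 1 * deriv u (t + c) 0 = 0)
    (h2 : ∀ t : ℝ, deriv u t 0 * u (t + c) 1 - deriv u t 1 * u (t + c) 0 = 0)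
    (t₀ : ℝ) (h3 : u t₀ 0 * u (t₀ + c) 1 - u t₀ 1 * u (t₀ + c) 0 = 1)
    (Γ : ℝ → Fin 3 → ℝ) (hΓ : ∀ t : ℝ, Γ t = ![u t 0, u t 1, 1]) :
    (∀ t : ℝ, u t 0 * u (t + c) 1 - u t 1 * u (t + c) 0 = 1) ∧
    ∃ f : (Fin 3 → ℝ) ≃ₗ[ℝ] Module.Dual ℝ (Fin 3 → ℝ),
      (∀ x y : Fin 3 → ℝ, f x y = (x 0 * y 1 - x 1 * y 0) - x 2 * y 2) ∧
      ∀ t : ℝ, f (Γ t) (Γ (t + c)) = 0 ∧ f (Γ t) (deriv Γ (t + c)) = 0 := by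
  have hud : Differentiable ℝ u := hu.differentiable one_ne_zero
  have harea (t : ℝ) : areaForm (u t) (u (t + c)) = 1 :=
    (areaForm_shift_eq_of_radon hud h1 h2 t t₀).trans h3
  have hΓ' (s : ℝ) : deriv Γ s = ![deriv u s 0, deriv u s 1, 0] := by
    rw [funext hΓ]
    exact (hud s).hasDerivAt.homogenize.deriv
  let f := liftedAreaForm.toDual liftedAreaForm_nondegenerate
  have hf (x y : Fin 3 → ℝ) : f x y = (x 0 * y 1 - x 1 * y 0) - x 2 * y 2 :=
    liftedAreaForm_apply x y
  refine ⟨harea, f, hf, fun t => ⟨?_, ?_⟩⟩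
  · simp only [hf, hΓ, Matrix.cons_val, mul_one]
    exact sub_eq_zero.2 (harea t)
  · simpa [hf, hΓ, hΓ'] using h1 t

/-- Radon curves are projectively self-dual: if `ω(u(t), u'(t+c)) = 0 = ω(u'(t), u(t+c))`
and `ω(u(t₀), u(t₀+c)) = 1` for some `t₀`, then `ω(u(t), u(t+c)) = 1` for all `t` and the
lift `Γ(t) = (u(t), 1)` is self-dual via `f(x)(y) = (x₁y₂ − x₂y₁) − x₃y₃`. -/
theorem stmt_17 (u : ℝ → Fin 2 → ℝ) (hu : ContDiff ℝ 1 u) (c : ℝ) (hc : 0 < c)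
    (h1 : ∀ t : ℝ, u t 0 * deriv u (t + c) 1 - u t 1 * deriv u (t + c) 0 = 0)
    (h2 : ∀ t : ℝ, deriv u t 0 * u (t + c) 1 - deriv u t 1 * u (t + c) 0 = 0)
    (t₀ : ℝ) (h3 : u t₀ 0 * u (t₀ + c) 1 - u t₀ 1 * u (t₀ + c) 0 = 1)
    (Γ : ℝ → Fin 3 → ℝ) (hΓ : ∀ t : ℝ, Γ t = ![u t 0, u t 1, 1]) :
    (∀ t : ℝ, u t 0 * u (t + c) 1 - u t 1 * u (t + c) 0 = 1) ∧
    ∃ f : (Fin 3 → ℝ) ≃ₗ[ℝ] Module.Dual ℝ (Fin 3 → ℝ),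
      (∀ x y : Fin 3 → ℝ, f x y = (x 0 * y 1 - x 1 * y 0) - x 2 * y 2) ∧
      ∀ t : ℝ, f (Γ t) (Γ (t + c)) = 0 ∧ f (Γ t) (deriv Γ (t + c)) = 0 :=
  stmt_17_general u hu c h1 h2 t₀ h3 Γ hΓ
end
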